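/- arXiv:1608.03882 — 7 statements merged into one kernel-verified Lean document; each statement's English description precedes it below -/
import Mathlib

section
/- For each p ∈ {2,3,4}, every integer n with 1 ≤ n ≤ (p−1)(p−2), as well as n = (p−1)², is attainable from T = {(p,0),(0,p)}. -/
open Pointwise MeasureTheory

/-- The Newton polyhedron `Γ₊(T)`: the Minkowski sum of the convex hull of the
(real images of the) lattice points of `T` with the nonnegative quadrant. -/
noncomputable def GammaPlus (T : Finset (ℕ × ℕ)) : Set (ℝ × ℝ) :=
  convexHull ℝ ((fun v : ℕ × ℕ => ((v.1 : ℝ), (v.2 : ℝ))) '' (T : Set (ℕ × ℕ))) +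
    {v : ℝ × ℝ | 0 ≤ v.1 ∧ 0 ≤ v.2}

/-- `a(T)`: the smallest `x` with `(x,0) ∈ Γ₊(T)`. -/
noncomputable def axisA (T : Finset (ℕ × ℕ)) : ℝ :=
  sInf {x : ℝ | (x, (0 : ℝ)) ∈ GammaPlus T}

/-- `b(T)`: the smallest `y` with `(0,y) ∈ Γ₊(T)`. -/
noncomputable def axisB (T : Finset (ℕ × ℕ)) : ℝ :=
  sInf {y : ℝ | ((0 : ℝ), y) ∈ GammaPlus T}

/-- `S(T)`: the Lebesgue area of the part of the nonnegative quadrant not in `Γ₊(T)`. -/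
noncomputable def areaS (T : Finset (ℕ × ℕ)) : ℝ :=
  (volume ({v : ℝ × ℝ | 0 ≤ v.1 ∧ 0 ≤ v.2} \ GammaPlus T)).toReal

/-- The Newton number `ν(T) = 2 S(T) - a(T) - b(T) + 1`. -/
noncomputable def newtonNumber (T : Finset (ℕ × ℕ)) : ℝ :=
  2 * areaS T - axisA T - axisB T + 1

/-- An integer `n` is attainable from `T` if `n = ν(T ∪ P)` for some finite `P ⊆ ℕ²`. -/
def Attainable (T : Finset (ℕ × ℕ)) (n : ℤ) : Prop :=
  ∃ P : Finset (ℕ × ℕ), (n : ℝ) = newtonNumber (T ∪ P)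

lemma convex_C (c₁ c₂ c : ℝ) (hc1 : 0 ≤ c₁) (hc2 : 0 ≤ c₂) :
    Convex ℝ {v : ℝ × ℝ | 0 ≤ v.1 ∧ 0 ≤ v.2 ∧ c ≤ c₁ * v.1 + c₂ * v.2} := by
  rintro x ⟨hx1, hx2, hx3⟩ y ⟨hy1, hy2, hy3⟩ a b ha hb hab
  refine ⟨?_, ?_, ?_⟩
  · simpa using add_nonneg (mul_nonneg ha hx1) (mul_nonneg hb hy1)
  · simpa using add_nonneg (mul_nonneg ha hx2) (mul_nonneg hb hy2)
  · simp only [Prod.fst_add, Prod.snd_add, Prod.smul_fst, Prod.smul_snd, smul_eq_mul]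
    have hb' : b = 1 - a := by linarith
    subst hb'
    nlinarith [mul_le_mul_of_nonneg_left hx3 ha, mul_le_mul_of_nonneg_left hy3 hb]

lemma gamma_pair (S : Finset (ℕ × ℕ)) (q r : ℕ) (hq : 0 < q) (hr : 0 < r)
    (h1 : ((q, 0) : ℕ × ℕ) ∈ S) (h2 : ((0, r) : ℕ × ℕ) ∈ S)
    (hall : ∀ v ∈ S, q * r ≤ r * v.1 + q * v.2) :
    GammaPlus S = {v : ℝ × ℝ | 0 ≤ v.1 ∧ 0 ≤ v.2 ∧ (q : ℝ) * r ≤ r * v.1 + q * v.2} := by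
  have hq' : (0:ℝ) < q := by exact_mod_cast hq
  have hr' : (0:ℝ) < r := by exact_mod_cast hr
  apply Set.Subset.antisymm
  · rintro w ⟨h, hh, u, hu, rfl⟩
    have hsub : (fun v : ℕ × ℕ => ((v.1 : ℝ), (v.2 : ℝ))) '' (S : Set (ℕ × ℕ)) ⊆
        {v : ℝ × ℝ | 0 ≤ v.1 ∧ 0 ≤ v.2 ∧ (q : ℝ) * r ≤ r * v.1 + q * v.2} := by
      rintro _ ⟨v, hv, rfl⟩
      refine ⟨by positivity, by positivity, ?_⟩
      have := hall v hv
      push_cast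
      exact_mod_cast this
    have hC := convexHull_min hsub (convex_C r q (q*r) hr'.le hq'.le)
    obtain ⟨hh1, hh2, hh3⟩ := hC hh
    obtain ⟨hu1, hu2⟩ := hu
    refine ⟨?_, ?_, ?_⟩
    · simpa using add_nonneg hh1 hu1
    · simpa using add_nonneg hh2 hu2
    · simp only [Prod.fst_add, Prod.snd_add]
      nlinarith [mul_nonneg hr'.le hu1, mul_nonneg hq'.le hu2]
  · rintro ⟨x, y⟩ ⟨hx, hy, hxy⟩
    have hA : ((q : ℝ), (0 : ℝ)) ∈ (fun v : ℕ × ℕ => ((v.1 : ℝ), (v.2 : ℝ))) '' (S : Set (ℕ × ℕ)) :=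
      ⟨(q, 0), h1, by simp⟩
    have hB : ((0 : ℝ), (r : ℝ)) ∈ (fun v : ℕ × ℕ => ((v.1 : ℝ), (v.2 : ℝ))) '' (S : Set (ℕ × ℕ)) :=
      ⟨(0, r), h2, by simp⟩
    have hA' := subset_convexHull ℝ _ hA
    have hB' := subset_convexHull ℝ _ hB
    by_cases hxq : (q : ℝ) ≤ x
    · exact ⟨((q : ℝ), 0), hA', (x - q, y), ⟨by simpa using hxq, hy⟩, by
        simp [Prod.ext_iff]⟩
    · push_neg at hxq
      set t : ℝ := x / q with ht
      have ht0 : 0 ≤ t := by positivity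
      have ht1 : t ≤ 1 := by rw [div_le_one hq']; exact hxq.le
      have hmem : t • ((q : ℝ), (0 : ℝ)) + (1 - t) • ((0 : ℝ), (r : ℝ)) ∈
          convexHull ℝ ((fun v : ℕ × ℕ => ((v.1 : ℝ), (v.2 : ℝ))) '' (S : Set (ℕ × ℕ))) :=
        (convex_convexHull ℝ _) hA' hB' ht0 (by linarith) (by ring)
      refine ⟨_, hmem, (0, y - (1 - t) * r), ⟨le_refl 0, ?_⟩, ?_⟩
      · have : (1 - t) * r ≤ y := by
          rw [ht]
          rw [div_le_one hq'] at ht1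
          have : (q - x) * r ≤ q * y := by nlinarith
          calc (1 - x / q) * r = (q - x) * r / q := by field_simp
          _ ≤ q * y / q := by apply div_le_div_of_nonneg_right this hq'.le |>.trans_eq rfl
          _ = y := by field_simp
        simpa using this
      · simp only [Prod.smul_mk, smul_eq_mul, Prod.mk_add_mk, Prod.ext_iff]
        constructor
        · show t * q + (1-t) * 0 + 0 = x
          simp [ht, div_mul_cancel₀ x hq'.ne']
        · ring

lemma volume_under (q : ℝ) (h : ℝ → ℝ) (hc : Continuous h)
    (hpos : ∀ x ∈ Set.Ico (0:ℝ) q, 0 < h x) :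
    volume {v : ℝ × ℝ | v.1 ∈ Set.Ico (0:ℝ) q ∧ v.2 ∈ Set.Ico 0 (h v.1)} =
      ENNReal.ofReal (∫ x in Set.Ico (0:ℝ) q, h x) := by
  have hset : {v : ℝ × ℝ | v.1 ∈ Set.Ico (0:ℝ) q ∧ v.2 ∈ Set.Ico 0 (h v.1)} =
      regionBetween (fun _ => 0) h (Set.Ico 0 q) ∪ (Set.Ico (0:ℝ) q ×ˢ {(0:ℝ)}) := by
    ext ⟨x, y⟩
    simp only [regionBetween, Set.mem_setOf_eq, Set.mem_union, Set.mem_prod,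
      Set.mem_singleton_iff, Set.mem_Ico, Set.mem_Ioo]
    constructor
    · rintro ⟨hx, hy0, hyh⟩
      rcases eq_or_lt_of_le hy0 with h0 | h0
      · exact Or.inr ⟨hx, h0.symm⟩
      · exact Or.inl ⟨hx, h0, hyh⟩
    · rintro (⟨hx, h0, hyh⟩ | ⟨hx, rfl⟩)
      · exact ⟨hx, h0.le, hyh⟩
      · exact ⟨hx, le_refl 0, hpos x hx⟩
  rw [hset, Measure.volume_eq_prod,
    measure_union (by
      rw [Set.disjoint_left]
      rintro ⟨x, y⟩ ⟨-, hy, -⟩ ⟨-, hy0⟩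
      simp only [Set.mem_singleton_iff] at hy0
      exact absurd hy0 (ne_of_gt hy))
      (measurableSet_Ico.prod (measurableSet_singleton 0)),
    Measure.prod_prod, Real.volume_singleton, mul_zero, add_zero,
    volume_regionBetween_eq_integral
      (integrableOn_const (by rw [Real.volume_Ico]; exact ENNReal.ofReal_ne_top) (by simp))
      (hc.integrableOn_Icc.mono_set Set.Ico_subset_Icc_self) measurableSet_Ico
      (fun x hx => (hpos x hx).le)]
  congr 1
  simp


lemma newton_pair (S : Finset (ℕ × ℕ)) (q r : ℕ) (hq : 0 < q) (hr : 0 < r)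
    (h1 : ((q, 0) : ℕ × ℕ) ∈ S) (h2 : ((0, r) : ℕ × ℕ) ∈ S)
    (hall : ∀ v ∈ S, q * r ≤ r * v.1 + q * v.2) :
    newtonNumber S = ((q : ℝ) - 1) * ((r : ℝ) - 1) := by
  have hq' : (0:ℝ) < q := by exact_mod_cast hq
  have hr' : (0:ℝ) < r := by exact_mod_cast hr
  have hG := gamma_pair S q r hq hr h1 h2 hall
  have hA : axisA S = q := by
    unfold axisA
    rw [hG]
    have : {x : ℝ | (x, (0:ℝ)) ∈ {v : ℝ × ℝ | 0 ≤ v.1 ∧ 0 ≤ v.2 ∧ (q : ℝ) * r ≤ r * v.1 + q * v.2}}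
        = Set.Ici (q : ℝ) := by
      ext x
      simp only [Set.mem_setOf_eq, Set.mem_Ici]
      constructor
      · rintro ⟨hx, -, hl⟩; nlinarith
      · intro hx; refine ⟨by linarith, le_refl 0, by nlinarith⟩
    rw [this, csInf_Ici]
  have hB : axisB S = r := by
    unfold axisB
    rw [hG]
    have : {y : ℝ | ((0:ℝ), y) ∈ {v : ℝ × ℝ | 0 ≤ v.1 ∧ 0 ≤ v.2 ∧ (q : ℝ) * r ≤ r * v.1 + q * v.2}}
        = Set.Ici (r : ℝ) := by
      ext y
      simp only [Set.mem_setOf_eq, Set.mem_Ici]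
      constructor
      · rintro ⟨-, hy, hl⟩; nlinarith
      · intro hy; exact ⟨le_refl 0, by linarith, by nlinarith⟩
    rw [this, csInf_Ici]
  have hS : areaS S = q * r / 2 := by
    unfold areaS
    rw [hG]
    have hsets : {v : ℝ × ℝ | 0 ≤ v.1 ∧ 0 ≤ v.2} \
        {v : ℝ × ℝ | 0 ≤ v.1 ∧ 0 ≤ v.2 ∧ (q : ℝ) * r ≤ r * v.1 + q * v.2} =
        {v : ℝ × ℝ | v.1 ∈ Set.Ico (0:ℝ) q ∧ v.2 ∈ Set.Ico 0 ((r : ℝ) - r / q * v.1)} := by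
      ext ⟨x, y⟩
      simp only [Set.mem_diff, Set.mem_setOf_eq, Set.mem_Ico, not_and, not_le]
      constructor
      · rintro ⟨⟨hx, hy⟩, hn⟩
        have hlt := hn hx hy
        constructor
        · exact ⟨hx, by nlinarith⟩
        · refine ⟨hy, ?_⟩
          have hqq : (q:ℝ) * ((r:ℝ) - r / q * x) = q * r - r * x := by field_simp
          nlinarith [hqq, hlt, hq']
      · rintro ⟨⟨hx, hxq⟩, hy, hyl⟩
        refine ⟨⟨hx, hy⟩, fun _ _ => ?_⟩
        have : q * y < q * ((r : ℝ) - r / q * x) := by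
          exact mul_lt_mul_of_pos_left hyl hq'
        have hqq : (q:ℝ) * ((r : ℝ) - r / q * x) = q * r - r * x := by field_simp
        nlinarith
    rw [hsets, volume_under q (fun x => (r:ℝ) - r / q * x) (by continuity) ?pos]
    case pos =>
      intro x hx
      simp only [Set.mem_Ico] at hx
      have : (r:ℝ) / q * x < r / q * q := mul_lt_mul_of_pos_left hx.2 (by positivity)
      rw [div_mul_cancel₀ _ hq'.ne'] at this
      linarith
    have hint : ∫ x in Set.Ico (0:ℝ) q, ((r:ℝ) - r / q * x) = q * r / 2 := by
      rw [MeasureTheory.integral_Ico_eq_integral_Ioo, ← MeasureTheory.integral_Ioc_eq_integral_Ioo,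
        ← intervalIntegral.integral_of_le hq'.le,
        intervalIntegral.integral_sub (intervalIntegrable_const)
          ((continuous_mul_left _).intervalIntegrable _ _),
        intervalIntegral.integral_const, intervalIntegral.integral_const_mul]
      simp only [smul_eq_mul, sub_zero]
      rw [integral_id]
      field_simp
      ring
    rw [hint, ENNReal.toReal_ofReal (by positivity)]
  unfold newtonNumber
  rw [hA, hB, hS]
  ring

lemma gamma_triple :
    GammaPlus {(4,0),(0,4),(1,2)} =
      {v : ℝ × ℝ | 0 ≤ v.1 ∧ 0 ≤ v.2 ∧ 4 ≤ 2 * v.1 + v.2 ∧ 8 ≤ 2 * v.1 + 3 * v.2} := by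
  have himg : (fun v : ℕ × ℕ => ((v.1 : ℝ), (v.2 : ℝ))) ''
      (({(4,0),(0,4),(1,2)} : Finset (ℕ × ℕ)) : Set (ℕ × ℕ)) =
      {((4:ℝ),(0:ℝ)), (0,4), (1,2)} := by
    simp [Finset.coe_insert, Set.image_insert_eq]
  unfold GammaPlus
  rw [himg]
  apply Set.Subset.antisymm
  · rintro w ⟨h, hh, u, ⟨hu1, hu2⟩, rfl⟩
    have hsub : ({((4:ℝ),(0:ℝ)), (0,4), (1,2)} : Set (ℝ × ℝ)) ⊆
        {v : ℝ × ℝ | 0 ≤ v.1 ∧ 0 ≤ v.2 ∧ 4 ≤ 2 * v.1 + v.2} ∩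
        {v : ℝ × ℝ | 0 ≤ v.1 ∧ 0 ≤ v.2 ∧ 8 ≤ 2 * v.1 + 3 * v.2} := by
      rintro v hv
      simp only [Set.mem_insert_iff, Set.mem_singleton_iff] at hv
      rcases hv with rfl | rfl | rfl <;> norm_num
    have hconv : Convex ℝ ({v : ℝ × ℝ | 0 ≤ v.1 ∧ 0 ≤ v.2 ∧ 4 ≤ 2 * v.1 + v.2} ∩
        {v : ℝ × ℝ | 0 ≤ v.1 ∧ 0 ≤ v.2 ∧ 8 ≤ 2 * v.1 + 3 * v.2}) := by
      have h1 := convex_C 2 1 4 (by norm_num) (by norm_num)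
      have h2 := convex_C 2 3 8 (by norm_num) (by norm_num)
      simpa using h1.inter h2
    obtain ⟨⟨e1, e2, e3⟩, ⟨-, -, e4⟩⟩ := convexHull_min hsub hconv hh
    refine ⟨?_, ?_, ?_, ?_⟩ <;> simp only [Prod.fst_add, Prod.snd_add, Set.mem_setOf_eq] <;>
      nlinarith
  · rintro ⟨x, y⟩ ⟨hx, hy, hl1, hl2⟩
    simp only [Set.mem_setOf_eq] at hx hy hl1 hl2
    have hA : ((4:ℝ), (0:ℝ)) ∈ ({((4:ℝ),(0:ℝ)), (0,4), (1,2)} : Set (ℝ × ℝ)) := by simp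
    have hB : ((0:ℝ), (4:ℝ)) ∈ ({((4:ℝ),(0:ℝ)), (0,4), (1,2)} : Set (ℝ × ℝ)) := by simp
    have hC : ((1:ℝ), (2:ℝ)) ∈ ({((4:ℝ),(0:ℝ)), (0,4), (1,2)} : Set (ℝ × ℝ)) := by simp
    have hA' := subset_convexHull ℝ _ hA
    have hB' := subset_convexHull ℝ _ hB
    have hC' := subset_convexHull ℝ _ hC
    rcases le_or_gt 4 x with h4 | h4
    · exact ⟨((4:ℝ), 0), hA', (x - 4, y), ⟨by simpa using h4, hy⟩, by simp [Prod.ext_iff]⟩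
    rcases le_or_gt 1 x with h1x | h1x
    · -- point (x, (8-2x)/3) on segment (1,2)-(4,0)
      have hmem : ((x - 1) / 3) • ((4:ℝ), (0:ℝ)) + (1 - (x - 1) / 3) • ((1:ℝ), (2:ℝ)) ∈
          convexHull ℝ ({((4:ℝ),(0:ℝ)), (0,4), (1,2)} : Set (ℝ × ℝ)) :=
        (convex_convexHull ℝ _) hA' hC' (by linarith) (by linarith) (by ring)
      refine ⟨_, hmem, (0, y - (8 - 2 * x) / 3), ⟨le_refl 0, by simp; linarith⟩, ?_⟩
      simp only [Prod.smul_mk, smul_eq_mul, Prod.mk_add_mk, Prod.ext_iff]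
      constructor <;> norm_num <;> ring
    · -- point (x, 4-2x) on segment (0,4)-(1,2)
      have hmem : x • ((1:ℝ), (2:ℝ)) + (1 - x) • ((0:ℝ), (4:ℝ)) ∈
          convexHull ℝ ({((4:ℝ),(0:ℝ)), (0,4), (1,2)} : Set (ℝ × ℝ)) :=
        (convex_convexHull ℝ _) hC' hB' (by linarith) (by linarith) (by ring)
      refine ⟨_, hmem, (0, y - (4 - 2 * x)), ⟨le_refl 0, by simp; linarith⟩, ?_⟩
      simp only [Prod.smul_mk, smul_eq_mul, Prod.mk_add_mk, Prod.ext_iff]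
      constructor <;> norm_num <;> ring

set_option maxHeartbeats 1000000 in
lemma newton_triple : newtonNumber {(4,0),(0,4),(1,2)} = 5 := by
  have hcont : Continuous (fun x : ℝ => max (4 - 2 * x) ((8 - 2 * x) / 3)) :=
    (continuous_const.sub (continuous_const.mul continuous_id')).max
      ((continuous_const.sub (continuous_const.mul continuous_id')).div_const 3)
  have hG := gamma_triple
  have hA : axisA {(4,0),(0,4),(1,2)} = 4 := by
    unfold axisA
    rw [hG]
    have : {x : ℝ | (x, (0:ℝ)) ∈ {v : ℝ × ℝ | 0 ≤ v.1 ∧ 0 ≤ v.2 ∧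
        4 ≤ 2 * v.1 + v.2 ∧ 8 ≤ 2 * v.1 + 3 * v.2}} = Set.Ici (4:ℝ) := by
      ext x
      simp only [Set.mem_setOf_eq, Set.mem_Ici]
      constructor
      · rintro ⟨-, -, -, hl⟩; linarith
      · intro hx; refine ⟨by linarith, le_refl 0, by linarith, by linarith⟩
    rw [this, csInf_Ici]
  have hB : axisB {(4,0),(0,4),(1,2)} = 4 := by
    unfold axisB
    rw [hG]
    have : {y : ℝ | ((0:ℝ), y) ∈ {v : ℝ × ℝ | 0 ≤ v.1 ∧ 0 ≤ v.2 ∧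
        4 ≤ 2 * v.1 + v.2 ∧ 8 ≤ 2 * v.1 + 3 * v.2}} = Set.Ici (4:ℝ) := by
      ext y
      simp only [Set.mem_setOf_eq, Set.mem_Ici]
      constructor
      · rintro ⟨-, -, hl, -⟩; linarith
      · intro hy; exact ⟨le_refl 0, by linarith, by linarith, by linarith⟩
    rw [this, csInf_Ici]
  have hS : areaS {(4,0),(0,4),(1,2)} = 6 := by
    unfold areaS
    rw [hG]
    have hsets : {v : ℝ × ℝ | 0 ≤ v.1 ∧ 0 ≤ v.2} \
        {v : ℝ × ℝ | 0 ≤ v.1 ∧ 0 ≤ v.2 ∧ 4 ≤ 2 * v.1 + v.2 ∧ 8 ≤ 2 * v.1 + 3 * v.2} =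
        {v : ℝ × ℝ | v.1 ∈ Set.Ico (0:ℝ) 4 ∧
          v.2 ∈ Set.Ico 0 (max (4 - 2 * v.1) ((8 - 2 * v.1) / 3))} := by
      ext ⟨x, y⟩
      simp only [Set.mem_diff, Set.mem_setOf_eq, Set.mem_Ico, not_and, not_le, lt_max_iff]
      constructor
      · rintro ⟨⟨hx, hy⟩, hn⟩
        rcases not_and_or.mp (by
          intro hcon
          exact absurd (hn hx hy) (by push_neg; exact ⟨hcon.1, hcon.2⟩)) with hl | hl <;>
          push_neg at hl
        · exact ⟨⟨hx, by linarith⟩, hy, Or.inl (by linarith)⟩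
        · exact ⟨⟨hx, by linarith⟩, hy, Or.inr (by linarith)⟩
      · rintro ⟨⟨hx, hx4⟩, hy, hm⟩
        refine ⟨⟨hx, hy⟩, fun _ _ => ?_⟩
        rcases hm with hm | hm
        · intro hcon; linarith
        · intro hcon; linarith
    rw [hsets, volume_under 4 (fun x => max (4 - 2 * x) ((8 - 2 * x) / 3)) hcont ?pos]
    case pos =>
      intro x hx
      simp only [Set.mem_Ico] at hx
      exact lt_max_of_lt_right (by linarith)
    have hint : ∫ x in Set.Ico (0:ℝ) 4, max (4 - 2 * x) ((8 - 2 * x) / 3) = 6 := by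
      rw [MeasureTheory.integral_Ico_eq_integral_Ioo, ← MeasureTheory.integral_Ioc_eq_integral_Ioo,
        ← intervalIntegral.integral_of_le (by norm_num : (0:ℝ) ≤ 4),
        ← intervalIntegral.integral_add_adjacent_intervals (b := (1:ℝ))
          (hcont.intervalIntegrable _ _) (hcont.intervalIntegrable _ _)]
      have e1 : ∫ x in (0:ℝ)..1, max (4 - 2 * x) ((8 - 2 * x) / 3) = ∫ x in (0:ℝ)..1, (4 - 2 * x) := by
        apply intervalIntegral.integral_congr
        intro x hx
        rw [Set.uIcc_of_le (by norm_num : (0:ℝ) ≤ 1), Set.mem_Icc] at hx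
        exact max_eq_left (by linarith)
      have e2 : ∫ x in (1:ℝ)..4, max (4 - 2 * x) ((8 - 2 * x) / 3) = ∫ x in (1:ℝ)..4, ((8 - 2 * x) / 3) := by
        apply intervalIntegral.integral_congr
        intro x hx
        rw [Set.uIcc_of_le (by norm_num : (1:ℝ) ≤ 4), Set.mem_Icc] at hx
        exact max_eq_right (by linarith)
      rw [e1, e2]
      have i1 : ∫ x in (0:ℝ)..1, (4 - 2 * x) = 3 := by
        rw [intervalIntegral.integral_sub intervalIntegrable_const
          ((continuous_mul_left _).intervalIntegrable _ _),
          intervalIntegral.integral_const, intervalIntegral.integral_const_mul, integral_id]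
        norm_num
      have i2 : ∫ x in (1:ℝ)..4, ((8 - 2 * x) / 3) = 3 := by
        simp_rw [div_eq_mul_inv, intervalIntegral.integral_mul_const]
        rw [intervalIntegral.integral_sub intervalIntegrable_const
          ((continuous_mul_left _).intervalIntegrable _ _),
          intervalIntegral.integral_const, intervalIntegral.integral_const_mul, integral_id]
        norm_num
      rw [i1, i2]; norm_num
    rw [hint]
    norm_num
  unfold newtonNumber
  rw [hA, hB, hS]
  norm_num


lemma attain (T S P : Finset (ℕ × ℕ)) (hTP : T ∪ P = S) (q r : ℕ) (hq : 0 < q) (hr : 0 < r)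
    (h1 : ((q, 0) : ℕ × ℕ) ∈ S) (h2 : ((0, r) : ℕ × ℕ) ∈ S)
    (hall : ∀ v ∈ S, q * r ≤ r * v.1 + q * v.2) (n : ℤ)
    (hn : (n : ℝ) = ((q : ℝ) - 1) * ((r : ℝ) - 1)) :
    ∃ P : Finset (ℕ × ℕ), (n : ℝ) = newtonNumber (T ∪ P) :=
  ⟨P, by rw [hTP, newton_pair S q r hq hr h1 h2 hall]; exact hn⟩

/-- for `p ∈ {2,3,4}`, every `n` with `1 ≤ n ≤ (p-1)(p-2)`, as well
as `n = (p-1)²`, is attainable from `tr(p,p)`. -/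
theorem stmt_5 (p : ℕ) (hp : p = 2 ∨ p = 3 ∨ p = 4) :
    (∀ n : ℤ, 1 ≤ n → n ≤ ((p : ℤ) - 1) * ((p : ℤ) - 2) →
      Attainable {(p, 0), (0, p)} n) ∧
    Attainable {(p, 0), (0, p)} (((p : ℤ) - 1) ^ 2) := by
  rcases hp with rfl | rfl | rfl
  · constructor
    · intro n h1 h2
      norm_num at h2
      omega
    · exact attain _ {(2,0),(0,2)} ∅ (by decide) 2 2 (by norm_num) (by norm_num)
        (by decide) (by decide) (by decide) _ (by norm_num)
  · constructor
    · intro n h1 h2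
      norm_num at h2
      interval_cases n
      · exact attain _ {(3,0),(0,3),(2,0),(0,2)} {(2,0),(0,2)} (by decide) 2 2
          (by norm_num) (by norm_num) (by decide) (by decide) (by decide) _ (by norm_num)
      · exact attain _ {(3,0),(0,3),(0,2)} {(0,2)} (by decide) 3 2
          (by norm_num) (by norm_num) (by decide) (by decide) (by decide) _ (by norm_num)
    · exact attain _ {(3,0),(0,3)} ∅ (by decide) 3 3 (by norm_num) (by norm_num)
        (by decide) (by decide) (by decide) _ (by norm_num)
  · constructor
    · intro n h1 h2
      norm_num at h2
      interval_cases n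
      · exact attain _ {(4,0),(0,4),(2,0),(0,2)} {(2,0),(0,2)} (by decide) 2 2
          (by norm_num) (by norm_num) (by decide) (by decide) (by decide) _ (by norm_num)
      · exact attain _ {(4,0),(0,4),(3,0),(0,2)} {(3,0),(0,2)} (by decide) 3 2
          (by norm_num) (by norm_num) (by decide) (by decide) (by decide) _ (by norm_num)
      · exact attain _ {(4,0),(0,4),(0,2)} {(0,2)} (by decide) 4 2
          (by norm_num) (by norm_num) (by decide) (by decide) (by decide) _ (by norm_num)
      · exact attain _ {(4,0),(0,4),(3,0),(0,3)} {(3,0),(0,3)} (by decide) 3 3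
          (by norm_num) (by norm_num) (by decide) (by decide) (by decide) _ (by norm_num)
      · exact ⟨{(1,2)}, by
          rw [show ({(4,0),(0,4)} : Finset (ℕ × ℕ)) ∪ {(1,2)} = {(4,0),(0,4),(1,2)} from by decide,
            newton_triple]
          norm_num⟩
      · exact attain _ {(4,0),(0,4),(0,3)} {(0,3)} (by decide) 4 3
          (by norm_num) (by norm_num) (by decide) (by decide) (by decide) _ (by norm_num)
    · exact attain _ {(4,0),(0,4)} ∅ (by decide) 4 4 (by norm_num) (by norm_num)
        (by decide) (by decide) (by decide) _ (by norm_num)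
end

section
/- For every integer k ≥ 2, every integer n with 1 ≤ n ≤ 2k−1 is attainable from T = {(2,0),(0,2k)}. -/
open Pointwise MeasureTheory

/-!
Adding the single point `(0, n + 1)` to `{(2, 0), (0, 2k)}` turns the Newton polyhedron into the
region of the quadrant on or above the segment from `(2, 0)` to `(0, n + 1)`: the point `(0, 2k)`
lies above that segment because `n + 1 ≤ 2k`. For such a triangle `a = p`, `b = q` and
`S = pq / 2`, so `ν = (p - 1)(q - 1)`, which is `n` for `p = 2`, `q = n + 1`.
-/

def aboveSegment (p q : ℝ) : Set (ℝ × ℝ) :=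
  {v | 0 ≤ v.1 ∧ 0 ≤ v.2 ∧ p * q ≤ q * v.1 + p * v.2}

lemma convex_aboveSegment (p q : ℝ) : Convex ℝ (aboveSegment p q) := by
  rintro v ⟨hv₁, hv₂, hv⟩ w ⟨hw₁, hw₂, hw⟩ a b ha hb hab
  simp only [aboveSegment, Set.mem_ofPred_eq, Prod.fst_add, Prod.snd_add, Prod.smul_fst,
    Prod.smul_snd, smul_eq_mul]
  refine ⟨by positivity, by positivity, ?_⟩
  have hpq : p * q = a * (p * q) + b * (p * q) := by rw [← add_mul, hab, one_mul]
  nlinarith [mul_le_mul_of_nonneg_left hv ha, mul_le_mul_of_nonneg_left hw hb]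

lemma gammaPlus_eq_aboveSegment {T : Finset (ℕ × ℕ)} {p q : ℕ} (hpT : (p, 0) ∈ T)
    (hqT : (0, q) ∈ T) (hT : ∀ v ∈ T, p * q ≤ q * v.1 + p * v.2) :
    GammaPlus T = aboveSegment p q := by
  apply subset_antisymm
  · rintro _ ⟨c, hc, w, ⟨hw₁, hw₂⟩, rfl⟩
    have hcT : c ∈ aboveSegment p q := by
      refine convexHull_min ?_ (convex_aboveSegment p q) hc
      rintro _ ⟨v, hv, rfl⟩
      exact ⟨by positivity, by positivity, by dsimp only; exact_mod_cast hT v hv⟩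
    obtain ⟨hc₁, hc₂, hc⟩ := hcT
    have hp : (0 : ℝ) ≤ p := p.cast_nonneg
    have hq : (0 : ℝ) ≤ q := q.cast_nonneg
    simp only [aboveSegment, Set.mem_ofPred_eq, Prod.fst_add, Prod.snd_add]
    refine ⟨by positivity, by positivity, ?_⟩
    nlinarith [mul_nonneg hq hw₁, mul_nonneg hp hw₂]
  · rintro ⟨x, y⟩ ⟨hx, hy, hxy⟩
    have mem_hull (v : ℕ × ℕ) (hv : v ∈ T) :
        ((v.1 : ℝ), (v.2 : ℝ)) ∈
          convexHull ℝ ((fun v : ℕ × ℕ => ((v.1 : ℝ), (v.2 : ℝ))) '' T) :=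
      subset_convexHull ℝ _ ⟨v, hv, rfl⟩
    rcases le_or_gt (p : ℝ) x with hpx | hxp
    · exact ⟨_, mem_hull _ hpT, (x - p, y), ⟨by simpa using hpx, hy⟩, by simp⟩
    · -- `(x, q - q x / p)` lies on the segment from `(0, q)` to `(p, 0)`
      have hp : (0 : ℝ) < p := hx.trans_lt hxp
      have hseg := convex_convexHull ℝ _ (mem_hull _ hqT) (mem_hull _ hpT)
        (a := 1 - x / p) (b := x / p) (by rw [sub_nonneg, div_le_one hp]; exact hxp.le)
        (by positivity) (by ring)
      refine ⟨_, hseg, (0, y - (q - q * x / p)), ⟨le_rfl, ?_⟩, ?_⟩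
      · have := (le_div_iff₀ hp).mpr (show (q - y) * p ≤ q * x by linarith)
        simp only
        linarith
      · ext <;> simp only [Prod.smul_mk, Prod.mk_add_mk, smul_eq_mul] <;> field_simp <;> ring

lemma setOf_mk_zero_mem_aboveSegment {p q : ℝ} (hp : 0 ≤ p) (hq : 0 < q) :
    {x | (x, 0) ∈ aboveSegment p q} = Set.Ici p := by
  ext x
  simp only [aboveSegment, Set.mem_ofPred_eq, Set.mem_Ici, mul_zero, add_zero, le_refl,
    true_and, mul_comm p q, mul_le_mul_iff_right₀ hq, and_iff_right_iff_imp]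
  exact hp.trans

lemma setOf_zero_mk_mem_aboveSegment {p q : ℝ} (hp : 0 < p) (hq : 0 ≤ q) :
    {y | (0, y) ∈ aboveSegment p q} = Set.Ici q := by
  ext y
  simp only [aboveSegment, Set.mem_ofPred_eq, Set.mem_Ici, mul_zero, zero_add, le_refl,
    true_and, mul_le_mul_iff_right₀ hp, and_iff_right_iff_imp]
  exact hq.trans

lemma volume_quadrant_diff_aboveSegment {p q : ℝ} (hp : 0 < p) (hq : 0 < q) :
    volume ({v : ℝ × ℝ | 0 ≤ v.1 ∧ 0 ≤ v.2} \ aboveSegment p q) =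
      ENNReal.ofReal (p * q / 2) := by
  set f : ℝ → ℝ := fun x => q - q * x / p
  -- `regionBetween` is open in the vertical direction, so the null bottom edge is added back
  have hset : {v : ℝ × ℝ | 0 ≤ v.1 ∧ 0 ≤ v.2} \ aboveSegment p q =
      regionBetween (fun _ => 0) f (Set.Ico 0 p) ∪ Set.Ico 0 p ×ˢ {0} := by
    have lt_f (x y : ℝ) : y < f x ↔ q * x + p * y < p * q := by
      rw [show f x = (p * q - q * x) / p by simp only [f]; field_simp, lt_div_iff₀ hp]
      constructor <;> intro <;> linarith
    ext ⟨x, y⟩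
    simp only [aboveSegment, regionBetween, Set.mem_sdiff, Set.mem_union, Set.mem_ofPred_eq,
      Set.mem_prod, Set.mem_Ico, Set.mem_Ioo, Set.mem_singleton_iff, not_and, not_le, lt_f]
    constructor
    · rintro ⟨⟨hx, hy⟩, h⟩
      have h := h hx hy
      have hxp : x < p := by nlinarith
      rcases hy.eq_or_lt with rfl | hy
      · exact .inr ⟨⟨hx, hxp⟩, rfl⟩
      · exact .inl ⟨⟨hx, hxp⟩, hy, h⟩
    · rintro (⟨⟨hx, -⟩, hy, h⟩ | ⟨⟨hx, hxp⟩, rfl⟩)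
      · exact ⟨⟨hx, hy.le⟩, fun _ _ => h⟩
      · exact ⟨⟨hx, le_rfl⟩, fun _ _ => by nlinarith⟩
  have hline : volume (Set.Ico (0 : ℝ) p ×ˢ ({0} : Set ℝ)) = 0 := by
    simp [Measure.volume_eq_prod, Measure.prod_prod]
  have hf : ∫ x in Set.Ico 0 p, f x = p * q / 2 := by
    rw [integral_Ico_eq_integral_Ioo, ← integral_Ioc_eq_integral_Ioo,
      ← intervalIntegral.integral_of_le hp.le,
      intervalIntegral.integral_sub intervalIntegrable_const
        (by apply Continuous.intervalIntegrable; fun_prop), intervalIntegral.integral_div,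
      intervalIntegral.integral_const_mul, integral_id, intervalIntegral.integral_const]
    field_simp
    ring
  have hf_int : IntegrableOn f (Set.Ico 0 p) :=
    (Continuous.integrableOn_Icc (by fun_prop)).mono_set Set.Ico_subset_Icc_self
  rw [hset, measure_congr (union_ae_eq_left_of_ae_eq_empty (ae_eq_empty.mpr hline)),
    Measure.volume_eq_prod, volume_regionBetween_eq_integral integrableOn_zero hf_int
      measurableSet_Ico ?_]
  · simp only [Pi.sub_apply, sub_zero, hf]
  · rintro x ⟨-, hx⟩
    have : q * x / p ≤ q := by rw [div_le_iff₀ hp]; nlinarith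
    simp only [f]
    linarith

lemma newtonNumber_eq_of_above_segment {T : Finset (ℕ × ℕ)} {p q : ℕ}
    (hp : 0 < p) (hq : 0 < q) (hpT : (p, 0) ∈ T) (hqT : (0, q) ∈ T)
    (hT : ∀ v ∈ T, p * q ≤ q * v.1 + p * v.2) :
    newtonNumber T = ((p : ℝ) - 1) * ((q : ℝ) - 1) := by
  have hp' : (0 : ℝ) < p := Nat.cast_pos.mpr hp
  have hq' : (0 : ℝ) < q := Nat.cast_pos.mpr hq
  have hG := gammaPlus_eq_aboveSegment hpT hqT hT
  rw [newtonNumber, areaS, axisA, axisB, hG, volume_quadrant_diff_aboveSegment hp' hq',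
    setOf_mk_zero_mem_aboveSegment hp'.le hq', setOf_zero_mk_mem_aboveSegment hp' hq'.le,
    csInf_Ici, csInf_Ici, ENNReal.toReal_ofReal (by positivity)]
  ring

theorem stmt_6_general (k : ℕ) (n : ℤ) (hn1 : 1 ≤ n) (hn2 : n ≤ 2 * (k : ℤ) - 1) :
    Attainable {(2, 0), (0, 2 * k)} n := by
  lift n to ℕ using by omega
  refine ⟨{(0, n + 1)}, ?_⟩
  rw [newtonNumber_eq_of_above_segment (p := 2) (q := n + 1) two_pos n.succ_pos
    (by simp) (by simp)]
  · push_cast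
    ring
  · simp only [Finset.mem_union, Finset.mem_insert, Finset.mem_singleton]
    rintro v ((rfl | rfl) | rfl) <;> omega

/-- for `k ≥ 2` every `n` with `1 ≤ n ≤ 2k - 1` is attainable from
`tr(2, 2k)`. -/
theorem stmt_6 (k : ℕ) (hk : 2 ≤ k) (n : ℤ) (hn1 : 1 ≤ n) (hn2 : n ≤ 2 * (k : ℤ) - 1) :
    Attainable {(2, 0), (0, 2 * k)} n :=
  stmt_6_general k n hn1 hn2
end

section
/- For every integer k ≥ 2, every integer n with 1 ≤ n ≤ 6k−2 and n ≠ 6k−3 is attainable from T = {(3,0),(0,3k)}. -/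
open Pointwise MeasureTheory

/-!
If the points of `T` already lie in `Γ₊(P)`, then `Γ₊(T ∪ P) = Γ₊(P)`, so it suffices to exhibit
sets `P` with `(3,0), (0,3k) ∈ Γ₊(P)` and the required Newton numbers. When `Γ₊(P)` is the part of
the quadrant above the graph of a decreasing convex `g` with root `a`, the Newton number is
`2 ∫₀^a g - a - g(0) + 1`. The pairs `{(2,0),(0,b)}` and `{(3,0),(0,b)}` with `b ≤ 3k` give
`b - 1` and `2(b - 1)`, i.e. all `n ≤ 3k - 1` and all even `n ≤ 6k - 2`. The triangles
`{(3,0),(2,d),(0,b)}` with `0 < d` and `3d ≤ b ≤ 3k` give `b + 3d - 2`, which covers the odd `n`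
from `3k` to `6k - 5`.
-/

open Set

def realPoints (T : Finset (ℕ × ℕ)) : Set (ℝ × ℝ) :=
  (fun v : ℕ × ℕ => ((v.1 : ℝ), (v.2 : ℝ))) '' (T : Set (ℕ × ℕ))

def quadrantAbove (g : ℝ → ℝ) : Set (ℝ × ℝ) :=
  {v | 0 ≤ v.1 ∧ 0 ≤ v.2 ∧ g v.1 ≤ v.2}

section GammaPlus

variable {T P : Finset (ℕ × ℕ)}

lemma convex_gammaPlus (T : Finset (ℕ × ℕ)) : Convex ℝ (GammaPlus T) :=
  (convex_convexHull ℝ _).add (convex_Ici (0 : ℝ × ℝ))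

lemma convexHull_subset_gammaPlus (T : Finset (ℕ × ℕ)) :
    convexHull ℝ (realPoints T) ⊆ GammaPlus T :=
  fun p hp => ⟨p, hp, 0, ⟨le_rfl, le_rfl⟩, add_zero p⟩

lemma mem_gammaPlus_of_le {p q : ℝ × ℝ} (hp : p ∈ GammaPlus T) (hpq : p ≤ q) :
    q ∈ GammaPlus T := by
  obtain ⟨h, hh, r, hr, rfl⟩ := hp
  refine ⟨h, hh, q - h, ⟨?_, ?_⟩, add_sub_cancel h q⟩
  · simpa using (le_add_of_nonneg_right hr.1).trans hpq.1
  · simpa using (le_add_of_nonneg_right hr.2).trans hpq.2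

lemma gammaPlus_subset_of_convex {K : Set (ℝ × ℝ)} (hK : Convex ℝ K)
    (hT : realPoints T ⊆ K) (hup : ∀ p ∈ K, ∀ q, p ≤ q → q ∈ K) : GammaPlus T ⊆ K := by
  rintro _ ⟨p, hp, r, hr, rfl⟩
  exact hup p (convexHull_min hT hK hp) _ (le_add_of_nonneg_right hr)

lemma gammaPlus_union_eq (h : realPoints T ⊆ GammaPlus P) : GammaPlus (T ∪ P) = GammaPlus P := by
  refine (gammaPlus_subset_of_convex (convex_gammaPlus P) ?_
    fun p hp q => mem_gammaPlus_of_le hp).antisymm ?_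
  · rw [realPoints, Finset.coe_union, image_union]
    exact union_subset h ((subset_convexHull ℝ _).trans (convexHull_subset_gammaPlus P))
  · exact add_subset_add_right (convexHull_mono (image_mono (by simp)))

lemma attainable_of_forall_mem_gammaPlus {n : ℤ}
    (h : realPoints T ⊆ GammaPlus P) (hn : (n : ℝ) = newtonNumber P) :
    Attainable T n :=
  ⟨P, by rw [hn]; unfold newtonNumber areaS axisA axisB; rw [gammaPlus_union_eq h]⟩

lemma gammaPlus_eq_quadrantAbove {g : ℝ → ℝ} (hconv : ConvexOn ℝ univ g) (hanti : Antitone g)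
    (hT : ∀ v ∈ T, g v.1 ≤ v.2)
    (hhull : ∀ x, 0 ≤ x → ∃ p ∈ convexHull ℝ (realPoints T), p ≤ (x, max (g x) 0)) :
    GammaPlus T = quadrantAbove g := by
  refine (gammaPlus_subset_of_convex (K := quadrantAbove g) ?_
    (by rintro _ ⟨v, hv, rfl⟩; exact ⟨by positivity, by positivity, hT v hv⟩)
    fun p hp q hpq => ?_).antisymm ?_
  · have : quadrantAbove g = Ici 0 ∩ {p | p.1 ∈ univ ∧ g p.1 ≤ p.2} := by
      ext; simp [quadrantAbove, Prod.le_def, and_assoc]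
    exact this ▸ (convex_Ici 0).inter hconv.convex_epigraph
  · exact ⟨hp.1.trans hpq.1, hp.2.1.trans hpq.2, (hanti hpq.1).trans (hp.2.2.trans hpq.2)⟩
  · rintro ⟨x, y⟩ ⟨hx, hy, hgy⟩
    obtain ⟨p, hp, hle⟩ := hhull x hx
    exact mem_gammaPlus_of_le (convexHull_subset_gammaPlus T hp)
      (hle.trans ⟨le_rfl, max_le hgy hy⟩)

end GammaPlus

lemma volume_axes : volume ({v : ℝ × ℝ | v.1 = 0} ∪ {v | v.2 = 0}) = 0 := by
  refine measure_union_null ?_ ?_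
  · rw [show {v : ℝ × ℝ | v.1 = 0} = {0} ×ˢ univ by ext; simp, Measure.volume_eq_prod,
      Measure.prod_prod]
    simp
  · rw [show {v : ℝ × ℝ | v.2 = 0} = univ ×ˢ {0} by ext; simp, Measure.volume_eq_prod,
      Measure.prod_prod]
    simp

section QuadrantAbove

variable {T : Finset (ℕ × ℕ)} {g : ℝ → ℝ} {a : ℝ}

lemma axisA_eq_of_gammaPlus_eq (hT : GammaPlus T = quadrantAbove g) (ha : 0 ≤ a)
    (hpos : ∀ x ∈ Ico 0 a, 0 < g x) (hneg : ∀ x, a ≤ x → g x ≤ 0) : axisA T = a := by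
  have : {x : ℝ | (x, (0 : ℝ)) ∈ GammaPlus T} = Ici a := by
    ext x
    simp only [hT, quadrantAbove, mem_ofPred_eq, mem_Ici, le_refl, true_and]
    refine ⟨fun ⟨hx, hgx⟩ => ?_, fun h => ⟨ha.trans h, hneg x h⟩⟩
    by_contra! h
    exact (hpos x ⟨hx, h⟩).not_ge hgx
  rw [axisA, this, csInf_Ici]

lemma axisB_eq_of_gammaPlus_eq (hT : GammaPlus T = quadrantAbove g) (hg0 : 0 ≤ g 0) :
    axisB T = g 0 := by
  have : {y : ℝ | ((0 : ℝ), y) ∈ GammaPlus T} = Ici (g 0) := by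
    ext y
    simp only [hT, quadrantAbove, mem_ofPred_eq, mem_Ici, le_refl, true_and]
    exact ⟨And.right, fun h => ⟨hg0.trans h, h⟩⟩
  rw [axisB, this, csInf_Ici]

lemma areaS_eq_integral_of_gammaPlus_eq (hT : GammaPlus T = quadrantAbove g) (ha : 0 ≤ a)
    (hg : Continuous g) (hpos : ∀ x ∈ Ioo 0 a, 0 ≤ g x) (hneg : ∀ x, a ≤ x → g x ≤ 0) :
    areaS T = ∫ x in 0..a, g x := by
  have hcut : ({v : ℝ × ℝ | 0 ≤ v.1 ∧ 0 ≤ v.2} \ quadrantAbove g) \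
      ({v : ℝ × ℝ | v.1 = 0} ∪ {v | v.2 = 0}) = regionBetween (fun _ => 0) g (Ioo 0 a) := by
    ext ⟨x, y⟩
    simp only [quadrantAbove, regionBetween, mem_sdiff, mem_ofPred_eq, mem_union, mem_Ioo,
      not_and, not_le, not_or]
    constructor
    · rintro ⟨⟨⟨hx, hy⟩, hgy⟩, hx0, hy0⟩
      have hgy := hgy hx hy
      refine ⟨⟨lt_of_le_of_ne hx (Ne.symm hx0), ?_⟩, lt_of_le_of_ne hy (Ne.symm hy0), hgy⟩
      by_contra! hax
      exact (hneg x hax).not_gt (hy.trans_lt hgy)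
    · rintro ⟨⟨hx, -⟩, hy, hgy⟩
      exact ⟨⟨⟨hx.le, hy.le⟩, fun _ _ => hgy⟩, hx.ne', hy.ne'⟩
  have hint : IntegrableOn g (Ioo 0 a) := hg.integrableOn_Icc.mono_set Ioo_subset_Icc_self
  rw [areaS, hT, ← measure_sdiff_null volume_axes, hcut, Measure.volume_eq_prod,
    volume_regionBetween_eq_integral (integrableOn_const measure_Ioo_lt_top.ne) hint
      measurableSet_Ioo hpos, intervalIntegral.integral_of_le ha, integral_Ioc_eq_integral_Ioo]
  simp only [Pi.sub_apply, sub_zero]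
  exact ENNReal.toReal_ofReal (setIntegral_nonneg measurableSet_Ioo hpos)

lemma newtonNumber_eq_integral_of_gammaPlus_eq (hT : GammaPlus T = quadrantAbove g) (ha : 0 < a)
    (hg : Continuous g) (hpos : ∀ x ∈ Ico 0 a, 0 < g x) (hneg : ∀ x, a ≤ x → g x ≤ 0) :
    newtonNumber T = 2 * (∫ x in 0..a, g x) - a - g 0 + 1 := by
  rw [newtonNumber, axisA_eq_of_gammaPlus_eq hT ha.le hpos hneg,
    axisB_eq_of_gammaPlus_eq hT (hpos 0 ⟨le_rfl, ha⟩).le,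
    areaS_eq_integral_of_gammaPlus_eq hT ha.le hg
      (fun x hx => (hpos x (Ioo_subset_Ico_self hx)).le) hneg]

end QuadrantAbove

lemma convexOn_affine (m c : ℝ) : ConvexOn ℝ univ fun x : ℝ => m * x + c :=
  ((LinearMap.mul ℝ ℝ m).convexOn convex_univ).add_const c

lemma gammaPlus_pair {a b : ℕ} (ha : 0 < a) :
    GammaPlus {(a, 0), (0, b)} = quadrantAbove fun x => b - b / a * x := by
  have ha' : (0 : ℝ) < a := by exact_mod_cast ha
  refine gammaPlus_eq_quadrantAbove ((convexOn_affine (-(b / a)) b).congr fun x _ => by ring)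
    (fun x y hxy => by gcongr) ?_ fun x hx => ?_
  · simp [ha'.ne']
  · have hA : ((a : ℝ), (0 : ℝ)) ∈ realPoints {(a, 0), (0, b)} :=
      ⟨(a, 0), by simp, by simp⟩
    have hB : ((0 : ℝ), (b : ℝ)) ∈ realPoints {(a, 0), (0, b)} :=
      ⟨(0, b), by simp, by simp⟩
    rcases le_total (a : ℝ) x with hax | hxa
    · exact ⟨_, subset_convexHull ℝ _ hA, hax, le_max_right _ _⟩
    · refine ⟨(x, b - b / a * x), segment_subset_convexHull hA hB
        ⟨x / a, 1 - x / a, by positivity, ?_, by ring, ?_⟩, le_rfl, le_max_left _ _⟩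
      · rw [sub_nonneg, div_le_one ha']; exact hxa
      · ext <;> simp <;> field_simp

lemma newtonNumber_pair {a b : ℕ} (ha : 0 < a) (hb : 0 < b) :
    newtonNumber {(a, 0), (0, b)} = ((a : ℝ) - 1) * ((b : ℝ) - 1) := by
  have ha' : (0 : ℝ) < a := by exact_mod_cast ha
  have hb' : (0 : ℝ) < b := by exact_mod_cast hb
  rw [newtonNumber_eq_integral_of_gammaPlus_eq (gammaPlus_pair ha) ha' (by fun_prop)
    (fun x hx => ?_) (fun x hx => ?_)]
  · rw [intervalIntegral.integral_sub intervalIntegrable_const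
      (Continuous.intervalIntegrable (by fun_prop) _ _), intervalIntegral.integral_const,
      intervalIntegral.integral_const_mul, integral_id, smul_eq_mul]
    field_simp
    ring
  · have : b / a * x < b := by rw [div_mul_eq_mul_div, div_lt_iff₀ ha']; nlinarith [hx.2]
    linarith
  · have : (b : ℝ) ≤ b / a * x := by rw [div_mul_eq_mul_div, le_div_iff₀ ha']; nlinarith
    linarith

lemma integral_affine (m c s t : ℝ) :
    ∫ x in s..t, (m * x + c) = m * (t ^ 2 - s ^ 2) / 2 + c * (t - s) := by
  rw [intervalIntegral.integral_add (Continuous.intervalIntegrable (by fun_prop) _ _)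
    intervalIntegrable_const, intervalIntegral.integral_const_mul, integral_id,
    intervalIntegral.integral_const, smul_eq_mul]
  ring

lemma gammaPlus_triple {b d : ℕ} (hdb : 3 * d ≤ b) :
    GammaPlus {(3, 0), (2, d), (0, b)} =
      quadrantAbove fun x => max (d * (3 - x)) (b - (b - d) / 2 * x) := by
  have hdb' : 3 * (d : ℝ) ≤ b := by exact_mod_cast hdb
  refine gammaPlus_eq_quadrantAbove (((convexOn_affine (-d) (3 * d)).congr fun x _ => by ring).sup
    ((convexOn_affine (-((b - d) / 2)) b).congr fun x _ => by ring))
    (fun x y hxy => max_le_max (by gcongr) (by gcongr; linarith)) ?_ fun x hx => ?_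
  · norm_num
    exact ⟨by linarith, by linarith⟩
  · have hA : ((3 : ℝ), (0 : ℝ)) ∈ realPoints {(3, 0), (2, d), (0, b)} :=
      ⟨(3, 0), by simp, by simp⟩
    have hB : ((2 : ℝ), (d : ℝ)) ∈ realPoints {(3, 0), (2, d), (0, b)} :=
      ⟨(2, d), by simp, by simp⟩
    have hC : ((0 : ℝ), (b : ℝ)) ∈ realPoints {(3, 0), (2, d), (0, b)} :=
      ⟨(0, b), by simp, by simp⟩
    rcases le_total 3 x with h3x | hx3
    · exact ⟨_, subset_convexHull ℝ _ hA, h3x, le_max_right _ _⟩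
    rcases le_total 2 x with h2x | hx2
    · refine ⟨(x, d * (3 - x)), segment_subset_convexHull hA hB
        ⟨x - 2, 3 - x, by linarith, by linarith, by ring, ?_⟩, le_rfl,
        (le_max_left _ _).trans (le_max_left _ _)⟩
      ext <;> simp <;> ring
    · refine ⟨(x, b - (b - d) / 2 * x), segment_subset_convexHull hB hC
        ⟨x / 2, 1 - x / 2, by linarith, by linarith, by ring, ?_⟩, le_rfl,
        (le_max_right _ _).trans (le_max_left _ _)⟩
      ext <;> simp
      ring

lemma newtonNumber_triple {b d : ℕ} (hd : 0 < d) (hdb : 3 * d ≤ b) :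
    newtonNumber {(3, 0), (2, d), (0, b)} = (b : ℝ) + 3 * d - 2 := by
  have hd' : (0 : ℝ) < d := by exact_mod_cast hd
  have hdb' : 3 * (d : ℝ) ≤ b := by exact_mod_cast hdb
  rw [newtonNumber_eq_integral_of_gammaPlus_eq (gammaPlus_triple hdb) three_pos (by fun_prop)
    (fun x hx => ?_) (fun x hx => ?_)]
  · rw [← intervalIntegral.integral_add_adjacent_intervals (b := 2)
      (Continuous.intervalIntegrable (by fun_prop) _ _)
      (Continuous.intervalIntegrable (by fun_prop) _ _)]
    have hleft : ∫ x in (0 : ℝ)..2, max (d * (3 - x)) (b - (b - d) / 2 * x) =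
        ∫ x in (0 : ℝ)..2, (-((b - d) / 2) * x + b) := by
      refine intervalIntegral.integral_congr fun x hx => ?_
      rw [uIcc_of_le (by norm_num)] at hx
      rw [max_eq_right (by nlinarith [hx.2])]
      ring
    have hright : ∫ x in (2 : ℝ)..3, max (d * (3 - x)) (b - (b - d) / 2 * x) =
        ∫ x in (2 : ℝ)..3, (-d * x + 3 * d) := by
      refine intervalIntegral.integral_congr fun x hx => ?_
      rw [uIcc_of_le (by norm_num)] at hx
      rw [max_eq_left (by nlinarith [hx.1])]
      ring
    rw [hleft, hright, integral_affine, integral_affine, max_eq_right (by linarith)]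
    ring
  · exact lt_max_of_lt_left (by nlinarith [hx.2])
  · exact max_le (by nlinarith) (by nlinarith)

lemma attainable_of_gammaPlus_eq_quadrantAbove {p q : ℕ} {P : Finset (ℕ × ℕ)} {g : ℝ → ℝ}
    {n : ℤ} (hP : GammaPlus P = quadrantAbove g) (hp : g p ≤ 0) (hq : g 0 ≤ q)
    (hn : (n : ℝ) = newtonNumber P) : Attainable {(p, 0), (0, q)} n := by
  refine attainable_of_forall_mem_gammaPlus ?_ hn
  rintro _ ⟨v, hv, rfl⟩
  rw [hP]
  rcases Finset.mem_insert.1 hv with rfl | hv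
  · exact ⟨by positivity, by simp, by simpa using hp⟩
  · obtain rfl := Finset.mem_singleton.1 hv
    exact ⟨by simp, by positivity, by simpa using hq⟩

lemma attainable_pair {a b p q : ℕ} (ha : 0 < a) (hb : 0 < b) (hap : a ≤ p) (hbq : b ≤ q) :
    Attainable {(p, 0), (0, q)} (((a : ℤ) - 1) * ((b : ℤ) - 1)) := by
  have ha' : (0 : ℝ) < a := by exact_mod_cast ha
  refine attainable_of_gammaPlus_eq_quadrantAbove (gammaPlus_pair ha) ?_ (by simpa using hbq)
    (by rw [newtonNumber_pair ha hb]; push_cast; ring)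
  have : (b : ℝ) ≤ b / a * p := by
    rw [div_mul_eq_mul_div, le_div_iff₀ ha']; gcongr
  linarith

lemma attainable_triple {b d p q : ℕ} (hd : 0 < d) (hdb : 3 * d ≤ b) (hp : 3 ≤ p)
    (hbq : b ≤ q) :
    Attainable {(p, 0), (0, q)} ((b : ℤ) + 3 * d - 2) := by
  have hdb' : 3 * (d : ℝ) ≤ b := by exact_mod_cast hdb
  have hp' : (3 : ℝ) ≤ p := by exact_mod_cast hp
  refine attainable_of_gammaPlus_eq_quadrantAbove (gammaPlus_triple hdb)
    (max_le (by nlinarith) (by nlinarith)) ?_ (by rw [newtonNumber_triple hd hdb]; push_cast; ring)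
  simpa [max_eq_right (by linarith : (d : ℝ) * 3 ≤ b)] using hbq

theorem stmt_7_general (k : ℕ) (n : ℤ) (hn1 : 1 ≤ n) (hn2 : n ≤ 6 * (k : ℤ) - 2)
    (hne : n ≠ 6 * (k : ℤ) - 3) :
    Attainable {(3, 0), (0, 3 * k)} n := by
  rcases le_or_gt n (3 * k - 1) with hsmall | hlarge
  · obtain ⟨b, rfl⟩ : ∃ b : ℕ, n = b - 1 := ⟨(n + 1).toNat, by omega⟩
    simpa using attainable_pair (a := 2) two_pos (by omega) (by norm_num) (by omega)
  rcases Int.even_or_odd' n with ⟨m, rfl | rfl⟩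
  · obtain ⟨b, rfl⟩ : ∃ b : ℕ, m = b - 1 := ⟨(m + 1).toNat, by omega⟩
    convert attainable_pair (a := 3) (b := b) (q := 3 * k) three_pos (by omega) le_rfl (by omega)
      using 1
    ring
  · obtain ⟨d, b, hd, hdb, hbk, hm⟩ : ∃ d b : ℕ, 0 < d ∧ 3 * d ≤ b ∧ b ≤ 3 * k ∧
        2 * m + 1 = (b : ℤ) + 3 * d - 2 :=
      -- `d = ⌊(n + 1) / 6⌋` is the largest `d` with `3d ≤ b = n + 2 - 3d`
      ⟨((m + 1) / 3).toNat, (2 * m + 3 - 3 * ((m + 1) / 3)).toNat,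
        by omega, by omega, by omega, by omega⟩
    exact hm ▸ attainable_triple hd hdb le_rfl hbk

/-- for `k ≥ 2` every `n` with `1 ≤ n ≤ 6k - 2`, `n ≠ 6k - 3`, is
attainable from `tr(3, 3k)`. -/
theorem stmt_7 (k : ℕ) (hk : 2 ≤ k) (n : ℤ) (hn1 : 1 ≤ n) (hn2 : n ≤ 6 * (k : ℤ) - 2)
    (hne : n ≠ 6 * (k : ℤ) - 3) :
    Attainable {(3, 0), (0, 3 * k)} n :=
  stmt_7_general k n hn1 hn2 hne
end

section
/- For every integer k ≥ 2, every integer n with 1 ≤ n ≤ 12k−3 and n ∉ {12k−4, 12k−5, 12k−10} is attainable from T = {(4,0),(0,4k)}. -/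
open Pointwise MeasureTheory

open Set

/-! Generic integration helpers -/

lemma int_lin (a b c d : ℝ) : ∫ x in c..d, (a + b*x) = a*(d-c) + b*(d^2-c^2)/2 := by
  have h1 : IntervalIntegrable (fun x : ℝ => b * x) volume c d :=
    (continuous_const.mul continuous_id).intervalIntegrable _ _
  rw [intervalIntegral.integral_add intervalIntegrable_const h1,
      intervalIntegral.integral_const, intervalIntegral.integral_const_mul, integral_id]
  simp [smul_eq_mul]; ring

lemma volume_under_s8 (a b : ℝ) (hab : a ≤ b) (g : ℝ → ℝ) (hg : Continuous g)
    (hpos : ∀ x ∈ Ioo a b, 0 ≤ g x) :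
    volume (regionBetween (fun _ => (0:ℝ)) g (Ioo a b)) = ENNReal.ofReal (∫ x in a..b, g x) := by
  rw [Measure.volume_eq_prod ℝ ℝ]
  rw [volume_regionBetween_eq_integral
    (integrableOn_const measure_Ioo_lt_top.ne)
    ((hg.integrableOn_Icc).mono_set Ioo_subset_Icc_self) measurableSet_Ioo hpos]
  congr 1
  have h : (g - fun _ => (0:ℝ)) = g := by funext x; simp
  rw [h, ← MeasureTheory.integral_Ioc_eq_integral_Ioo, ← intervalIntegral.integral_of_le hab]

lemma vol_vline (c : ℝ) : volume (({c} : Set ℝ) ×ˢ (univ : Set ℝ)) = 0 := by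
  rw [Measure.volume_eq_prod ℝ ℝ, Measure.prod_prod, Real.volume_singleton, zero_mul]

lemma vol_hline (c : ℝ) : volume ((univ : Set ℝ) ×ˢ ({c} : Set ℝ)) = 0 := by
  rw [Measure.volume_eq_prod ℝ ℝ, Measure.prod_prod, Real.volume_singleton, mul_zero]

/-! The two-point staircase -/

lemma gamma2_eq (U : Finset (ℕ × ℕ)) (p q : ℕ) (hp : 1 ≤ p) (hq : 1 ≤ q)
    (hp0 : (p,0) ∈ U) (h0q : (0,q) ∈ U)
    (hall : ∀ v ∈ U, p*q ≤ q*v.1 + p*v.2) :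
    GammaPlus U = {v : ℝ×ℝ | 0 ≤ v.1 ∧ 0 ≤ v.2 ∧ (p:ℝ)*q ≤ q*v.1 + p*v.2} := by
  have hpR : (1:ℝ) ≤ p := by exact_mod_cast hp
  have hqR : (1:ℝ) ≤ q := by exact_mod_cast hq
  apply Set.Subset.antisymm
  · rintro x hx
    rw [GammaPlus, Set.mem_add] at hx
    obtain ⟨u, hu, w, hw, rfl⟩ := hx
    obtain ⟨hw1, hw2⟩ := hw
    have hhull : u ∈ {v : ℝ×ℝ | 0 ≤ v.1 ∧ 0 ≤ v.2 ∧ (p:ℝ)*q ≤ q*v.1 + p*v.2} := by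
      refine convexHull_min ?_ ?_ hu
      · rintro _ ⟨v, hv, rfl⟩
        have hc := hall v hv
        have hc' : ((p*q:ℕ):ℝ) ≤ ((q*v.1 + p*v.2 : ℕ):ℝ) := Nat.cast_le.mpr hc
        push_cast at hc'
        exact ⟨by positivity, by positivity, hc'⟩
      · intro a ha b hb s t hs ht hst
        obtain ⟨ha1, ha2, ha3⟩ := ha
        obtain ⟨hb1, hb2, hb3⟩ := hb
        simp only [Set.mem_setOf_eq, Prod.fst_add, Prod.snd_add, Prod.smul_fst,
          Prod.smul_snd, smul_eq_mul]
        refine ⟨by nlinarith [mul_nonneg hs ha1, mul_nonneg ht hb1],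
          by nlinarith [mul_nonneg hs ha2, mul_nonneg ht hb2],
          ?_⟩
        have key : (s+t)*((p:ℝ)*q) ≤ (q:ℝ)*(s*a.1+t*b.1)+(p:ℝ)*(s*a.2+t*b.2) := by
          nlinarith [mul_le_mul_of_nonneg_left ha3 hs, mul_le_mul_of_nonneg_left hb3 ht]
        rw [hst, one_mul] at key
        exact key
    obtain ⟨h1, h2, h3⟩ := hhull
    refine ⟨by simp only [Prod.fst_add]; linarith, by simp only [Prod.snd_add]; linarith, ?_⟩
    simp only [Prod.fst_add, Prod.snd_add]
    nlinarith [mul_nonneg (by linarith : (0:ℝ) ≤ (q:ℝ)) hw1,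
      mul_nonneg (by linarith : (0:ℝ) ≤ (p:ℝ)) hw2]
  · rintro ⟨x,y⟩ ⟨hx0, hy0, hL⟩
    simp only [Set.mem_setOf_eq] at hx0 hy0 hL
    rw [GammaPlus, Set.mem_add]
    have mp0 : ((p:ℝ),(0:ℝ)) ∈ (fun v : ℕ × ℕ => ((v.1:ℝ),(v.2:ℝ))) '' (U : Set (ℕ×ℕ)) :=
      ⟨(p,0), hp0, by norm_num⟩
    have m0q : ((0:ℝ),(q:ℝ)) ∈ (fun v : ℕ × ℕ => ((v.1:ℝ),(v.2:ℝ))) '' (U : Set (ℕ×ℕ)) :=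
      ⟨(0,q), h0q, by norm_num⟩
    have hpp : (0:ℝ) < p := by linarith
    rcases le_or_gt (p:ℝ) x with h4 | h4
    · refine ⟨((p:ℝ),(0:ℝ)), subset_convexHull ℝ _ mp0, (x-p, y),
        ⟨by simpa using by linarith, by simpa using hy0⟩, ?_⟩
      simp only [Prod.mk_add_mk, Prod.mk.injEq]
      constructor <;> ring
    · have key : ((p:ℝ)-x)/p*q ≤ y := by
        rw [div_mul_eq_mul_div, div_le_iff₀ hpp]
        nlinarith
      refine ⟨(((p:ℝ)-x)/p) • ((0:ℝ),(q:ℝ)) + (x/p) • ((p:ℝ),(0:ℝ)),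
        segment_subset_convexHull m0q mp0
          ⟨((p:ℝ)-x)/p, x/p, div_nonneg (by linarith) hpp.le, div_nonneg hx0 hpp.le, by field_simp; ring, rfl⟩,
        (0, y - ((p:ℝ)-x)/p*q), ⟨le_refl 0, by simpa using by linarith⟩, ?_⟩
      simp only [Prod.smul_mk, smul_eq_mul, Prod.mk_add_mk, Prod.mk.injEq]
      constructor
      · field_simp; ring
      · ring

lemma newton2 (U : Finset (ℕ × ℕ)) (p q : ℕ) (hp : 1 ≤ p) (hq : 1 ≤ q)
    (hU : GammaPlus U = {v : ℝ×ℝ | 0 ≤ v.1 ∧ 0 ≤ v.2 ∧ (p:ℝ)*q ≤ q*v.1 + p*v.2}) :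
    newtonNumber U = ((p:ℝ)-1)*((q:ℝ)-1) := by
  have hpR : (1:ℝ) ≤ p := by exact_mod_cast hp
  have hqR : (1:ℝ) ≤ q := by exact_mod_cast hq
  have hpp : (0:ℝ) < p := by linarith
  have hqq : (0:ℝ) < q := by linarith
  -- axis values
  have ha : axisA U = p := by
    have h : {x : ℝ | (x, (0:ℝ)) ∈ GammaPlus U} = Ici (p:ℝ) := by
      rw [hU]; ext x
      simp only [Set.mem_setOf_eq, mem_Ici]
      constructor
      · rintro ⟨h0, -, h3⟩
        nlinarith
      · intro h
        refine ⟨by linarith, le_refl 0, by nlinarith⟩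
    rw [axisA, h, csInf_Ici]
  have hb : axisB U = q := by
    have h : {y : ℝ | ((0:ℝ), y) ∈ GammaPlus U} = Ici (q:ℝ) := by
      rw [hU]; ext y
      simp only [Set.mem_setOf_eq, mem_Ici]
      constructor
      · rintro ⟨-, h0, h3⟩
        nlinarith
      · intro h
        refine ⟨le_refl 0, by linarith, by nlinarith⟩
    rw [axisB, h, csInf_Ici]
  -- area
  have harea : areaS U = (p:ℝ)*q/2 := by
    set g : ℝ → ℝ := fun x => (q:ℝ)*((p:ℝ)-x)/p with hg
    have hgc : Continuous g := by fun_prop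
    set R : Set (ℝ×ℝ) := regionBetween (fun _ => (0:ℝ)) g (Ioo 0 (p:ℝ)) with hR
    set Z : Set (ℝ×ℝ) := (({0} : Set ℝ) ×ˢ (univ : Set ℝ)) ∪ ((univ : Set ℝ) ×ˢ ({0} : Set ℝ)) with hZdef
    have hZ : volume Z = 0 :=
      le_antisymm (le_trans (measure_union_le _ _) (by rw [vol_vline, vol_hline, add_zero])) (zero_le)
    have hsub1 : R ⊆ {v : ℝ × ℝ | 0 ≤ v.1 ∧ 0 ≤ v.2} \ GammaPlus U := by
      rintro ⟨x,y⟩ ⟨hx, hy⟩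
      simp only [mem_Ioo] at hx hy
      have hyg : y < g x := hy.2
      have : (p:ℝ)*y < q*((p:ℝ)-x) := by
        rw [hg] at hyg
        simp only at hyg
        nlinarith [(lt_div_iff₀ hpp).mp (by rw [mul_comm] at hyg ⊢; linarith : y < (q:ℝ)*((p:ℝ)-x)/p)]
      refine ⟨⟨hx.1.le, hy.1.le⟩, ?_⟩
      rw [hU]
      rintro ⟨-, -, hL⟩
      nlinarith
    have hsub2 : {v : ℝ × ℝ | 0 ≤ v.1 ∧ 0 ≤ v.2} \ GammaPlus U ⊆ R ∪ Z := by
      rintro ⟨x,y⟩ ⟨⟨hx0, hy0⟩, hH⟩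
      rw [hU] at hH
      have hviol : ¬ ((p:ℝ)*q ≤ q*x + p*y) := fun hc => hH ⟨hx0, hy0, hc⟩
      push_neg at hviol
      rcases eq_or_lt_of_le hx0 with h | hx0'
      · exact Or.inr (Or.inl ⟨by simpa using h.symm, trivial⟩)
      rcases eq_or_lt_of_le hy0 with h | hy0'
      · exact Or.inr (Or.inr ⟨trivial, by simpa using h.symm⟩)
      left
      have hxp : x < p := by nlinarith
      refine ⟨⟨hx0', hxp⟩, ⟨hy0', ?_⟩⟩
      show y < g x
      rw [hg]
      simp only
      rw [lt_div_iff₀ hpp]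
      nlinarith
    have hInt : ∫ x in (0:ℝ)..(p:ℝ), g x = (p:ℝ)*q/2 := by
      have hfe : g = fun x => (q:ℝ) + (-((q:ℝ)/p))*x := by
        funext x; rw [hg]; field_simp; ring
      rw [hfe, int_lin]
      field_simp
      ring
    have hpos : ∀ x ∈ Ioo (0:ℝ) (p:ℝ), 0 ≤ g x := by
      intro x hx
      exact div_nonneg (mul_nonneg hqq.le (by linarith [hx.2])) hpp.le
    have hvol : volume ({v : ℝ × ℝ | 0 ≤ v.1 ∧ 0 ≤ v.2} \ GammaPlus U)
        = ENNReal.ofReal ((p:ℝ)*q/2) := by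
      apply le_antisymm
      · calc volume ({v : ℝ × ℝ | 0 ≤ v.1 ∧ 0 ≤ v.2} \ GammaPlus U)
            ≤ volume (R ∪ Z) := measure_mono hsub2
          _ ≤ volume R + volume Z := measure_union_le _ _
          _ = volume R := by rw [hZ, add_zero]
          _ = ENNReal.ofReal ((p:ℝ)*q/2) := by
              rw [hR, volume_under_s8 0 (p:ℝ) hpp.le g hgc hpos, hInt]
      · rw [← hInt, ← volume_under_s8 0 (p:ℝ) hpp.le g hgc hpos]
        exact measure_mono hsub1
    rw [areaS, hvol, ENNReal.toReal_ofReal (by positivity)]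
  rw [newtonNumber, ha, hb, harea]
  ring

/-! The three-point staircase `(0,q), (2,r), (4,0)` with `2r ≤ q`. -/

lemma gamma3_eq (U : Finset (ℕ × ℕ)) (q r : ℕ) (hr : 1 ≤ r) (hq : 2*r ≤ q)
    (h40 : (4,0) ∈ U) (h2r : (2,r) ∈ U) (h0q : (0,q) ∈ U)
    (hall : ∀ v ∈ U, 2*q ≤ (q-r)*v.1 + 2*v.2 ∧ 4*r ≤ r*v.1 + 2*v.2) :
    GammaPlus U = {v : ℝ×ℝ | 0 ≤ v.1 ∧ 0 ≤ v.2 ∧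
      2*(q:ℝ) ≤ ((q:ℝ)-(r:ℝ))*v.1 + 2*v.2 ∧ 4*(r:ℝ) ≤ (r:ℝ)*v.1 + 2*v.2} := by
  have hrR : (1:ℝ) ≤ r := by exact_mod_cast hr
  have hqR : 2*(r:ℝ) ≤ q := by exact_mod_cast hq
  apply Set.Subset.antisymm
  · rintro x hx
    rw [GammaPlus, Set.mem_add] at hx
    obtain ⟨u, hu, w, hw, rfl⟩ := hx
    obtain ⟨hw1, hw2⟩ := hw
    have hhull : u ∈ {v : ℝ×ℝ | 0 ≤ v.1 ∧ 0 ≤ v.2 ∧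
        2*(q:ℝ) ≤ ((q:ℝ)-(r:ℝ))*v.1 + 2*v.2 ∧ 4*(r:ℝ) ≤ (r:ℝ)*v.1 + 2*v.2} := by
      refine convexHull_min ?_ ?_ hu
      · rintro _ ⟨v, hv, rfl⟩
        obtain ⟨c1, c2⟩ := hall v hv
        have hc1 : ((2*q:ℕ):ℝ) ≤ (((q-r)*v.1 + 2*v.2 : ℕ):ℝ) := Nat.cast_le.mpr c1
        have hc2 : ((4*r:ℕ):ℝ) ≤ ((r*v.1 + 2*v.2 : ℕ):ℝ) := Nat.cast_le.mpr c2
        push_cast [Nat.cast_sub (show r ≤ q by omega)] at hc1 hc2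
        exact ⟨by positivity, by positivity, by linarith, by linarith⟩
      · intro a ha b hb s t hs ht hst
        obtain ⟨ha1, ha2, ha3, ha4⟩ := ha
        obtain ⟨hb1, hb2, hb3, hb4⟩ := hb
        simp only [Set.mem_setOf_eq, Prod.fst_add, Prod.snd_add, Prod.smul_fst,
          Prod.smul_snd, smul_eq_mul]
        refine ⟨by nlinarith [mul_nonneg hs ha1, mul_nonneg ht hb1],
          by nlinarith [mul_nonneg hs ha2, mul_nonneg ht hb2], ?_, ?_⟩
        · have key : (s+t)*(2*(q:ℝ)) ≤ ((q:ℝ)-(r:ℝ))*(s*a.1+t*b.1)+2*(s*a.2+t*b.2) := by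
            nlinarith [mul_le_mul_of_nonneg_left ha3 hs, mul_le_mul_of_nonneg_left hb3 ht]
          rw [hst, one_mul] at key
          exact key
        · have key : (s+t)*(4*(r:ℝ)) ≤ (r:ℝ)*(s*a.1+t*b.1)+2*(s*a.2+t*b.2) := by
            nlinarith [mul_le_mul_of_nonneg_left ha4 hs, mul_le_mul_of_nonneg_left hb4 ht]
          rw [hst, one_mul] at key
          exact key
    obtain ⟨h1, h2, h3, h4⟩ := hhull
    refine ⟨by simp only [Prod.fst_add]; linarith, by simp only [Prod.snd_add]; linarith, ?_, ?_⟩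
    · simp only [Prod.fst_add, Prod.snd_add]
      nlinarith [mul_nonneg (by linarith : (0:ℝ) ≤ (q:ℝ)-(r:ℝ)) hw1]
    · simp only [Prod.fst_add, Prod.snd_add]
      nlinarith [mul_nonneg (by linarith : (0:ℝ) ≤ (r:ℝ)) hw1]
  · rintro ⟨x,y⟩ ⟨hx0, hy0, hL1, hL2⟩
    simp only [Set.mem_setOf_eq] at hx0 hy0 hL1 hL2
    rw [GammaPlus, Set.mem_add]
    have m40 : ((4:ℝ),(0:ℝ)) ∈ (fun v : ℕ × ℕ => ((v.1:ℝ),(v.2:ℝ))) '' (U : Set (ℕ×ℕ)) :=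
      ⟨(4,0), h40, by norm_num⟩
    have m2r : ((2:ℝ),(r:ℝ)) ∈ (fun v : ℕ × ℕ => ((v.1:ℝ),(v.2:ℝ))) '' (U : Set (ℕ×ℕ)) :=
      ⟨(2,r), h2r, by norm_num⟩
    have m0q : ((0:ℝ),(q:ℝ)) ∈ (fun v : ℕ × ℕ => ((v.1:ℝ),(v.2:ℝ))) '' (U : Set (ℕ×ℕ)) :=
      ⟨(0,q), h0q, by norm_num⟩
    rcases le_or_gt 4 x with h4 | h4
    · refine ⟨((4:ℝ),(0:ℝ)), subset_convexHull ℝ _ m40, (x-4, y),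
        ⟨by simpa using by linarith, by simpa using hy0⟩, ?_⟩
      simp only [Prod.mk_add_mk, Prod.mk.injEq]
      constructor <;> ring
    · rcases le_or_gt 2 x with h2 | h2
      · refine ⟨((4-x)/2) • ((2:ℝ),(r:ℝ)) + ((x-2)/2) • ((4:ℝ),(0:ℝ)),
          segment_subset_convexHull m2r m40
            ⟨(4-x)/2, (x-2)/2, by linarith, by linarith, by ring, rfl⟩,
          (0, y - (r:ℝ)*(4-x)/2), ⟨le_refl 0, by simpa using by linarith⟩, ?_⟩
        simp only [Prod.smul_mk, smul_eq_mul, Prod.mk_add_mk, Prod.mk.injEq]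
        constructor <;> ring
      · refine ⟨((2-x)/2) • ((0:ℝ),(q:ℝ)) + (x/2) • ((2:ℝ),(r:ℝ)),
          segment_subset_convexHull m0q m2r
            ⟨(2-x)/2, x/2, by linarith, by linarith, by ring, rfl⟩,
          (0, y - ((2-x)/2*(q:ℝ) + x/2*(r:ℝ))), ⟨le_refl 0, by simpa using by linarith⟩, ?_⟩
        simp only [Prod.smul_mk, smul_eq_mul, Prod.mk_add_mk, Prod.mk.injEq]
        constructor <;> ring

lemma newton3 (U : Finset (ℕ × ℕ)) (q r : ℕ) (hr : 1 ≤ r) (hq : 2*r ≤ q)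
    (hU : GammaPlus U = {v : ℝ×ℝ | 0 ≤ v.1 ∧ 0 ≤ v.2 ∧
      2*(q:ℝ) ≤ ((q:ℝ)-(r:ℝ))*v.1 + 2*v.2 ∧ 4*(r:ℝ) ≤ (r:ℝ)*v.1 + 2*v.2}) :
    newtonNumber U = (q:ℝ) + 4*(r:ℝ) - 3 := by
  have hrR : (1:ℝ) ≤ r := by exact_mod_cast hr
  have hqR : 2*(r:ℝ) ≤ q := by exact_mod_cast hq
  have ha : axisA U = 4 := by
    have h : {x : ℝ | (x, (0:ℝ)) ∈ GammaPlus U} = Ici (4:ℝ) := by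
      rw [hU]; ext x
      simp only [Set.mem_setOf_eq, mem_Ici]
      constructor
      · rintro ⟨h0, -, -, h4⟩
        nlinarith
      · intro h
        refine ⟨by linarith, le_refl 0, ?_, ?_⟩
        · nlinarith [mul_nonneg (by linarith : (0:ℝ) ≤ (q:ℝ)-(r:ℝ)) (by linarith : (0:ℝ) ≤ x-4)]
        · nlinarith [mul_nonneg (by linarith : (0:ℝ) ≤ (r:ℝ)) (by linarith : (0:ℝ) ≤ x-4)]
    rw [axisA, h, csInf_Ici]
  have hb : axisB U = q := by
    have h : {y : ℝ | ((0:ℝ), y) ∈ GammaPlus U} = Ici (q:ℝ) := by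
      rw [hU]; ext y
      simp only [Set.mem_setOf_eq, mem_Ici]
      constructor
      · rintro ⟨-, h0, h3, -⟩
        nlinarith
      · intro h
        exact ⟨le_refl 0, by linarith, by nlinarith, by nlinarith⟩
    rw [axisB, h, csInf_Ici]
  have harea : areaS U = (q:ℝ) + 2*(r:ℝ) := by
    set g1 : ℝ → ℝ := fun x => (q:ℝ) - ((q:ℝ)-(r:ℝ))*x/2 with hg1
    set g2 : ℝ → ℝ := fun x => 2*(r:ℝ) - (r:ℝ)*x/2 with hg2
    have hg1c : Continuous g1 := by fun_prop
    have hg2c : Continuous g2 := by fun_prop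
    set R1 : Set (ℝ×ℝ) := regionBetween (fun _ => (0:ℝ)) g1 (Ioo 0 2) with hR1
    set R2 : Set (ℝ×ℝ) := regionBetween (fun _ => (0:ℝ)) g2 (Ioo 2 4) with hR2
    set Z : Set (ℝ×ℝ) := ((({0} : Set ℝ) ×ˢ (univ : Set ℝ)) ∪ (({2} : Set ℝ) ×ˢ (univ : Set ℝ)))
        ∪ ((univ : Set ℝ) ×ˢ ({0} : Set ℝ)) with hZdef
    have hZ : volume Z = 0 := by
      refine le_antisymm (le_trans (measure_union_le _ _) ?_) (zero_le)
      rw [vol_hline, add_zero]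
      refine le_trans (measure_union_le _ _) ?_
      rw [vol_vline, vol_vline, add_zero]
    have hsub1 : R1 ∪ R2 ⊆ {v : ℝ × ℝ | 0 ≤ v.1 ∧ 0 ≤ v.2} \ GammaPlus U := by
      rintro ⟨x,y⟩ (⟨hx, hy⟩ | ⟨hx, hy⟩) <;> simp only [mem_Ioo] at hx hy
      · refine ⟨⟨hx.1.le, hy.1.le⟩, ?_⟩
        rw [hU]
        rintro ⟨-, -, hL1, -⟩
        have : y < g1 x := hy.2
        rw [hg1] at this; simp only at this
        linarith
      · refine ⟨⟨by linarith [hx.1], hy.1.le⟩, ?_⟩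
        rw [hU]
        rintro ⟨-, -, -, hL2⟩
        have : y < g2 x := hy.2
        rw [hg2] at this; simp only at this
        linarith
    have hsub2 : {v : ℝ × ℝ | 0 ≤ v.1 ∧ 0 ≤ v.2} \ GammaPlus U ⊆ (R1 ∪ R2) ∪ Z := by
      rintro ⟨x,y⟩ ⟨⟨hx0, hy0⟩, hH⟩
      rw [hU] at hH
      have hviol : ¬ (2*(q:ℝ) ≤ ((q:ℝ)-(r:ℝ))*x + 2*y ∧ 4*(r:ℝ) ≤ (r:ℝ)*x + 2*y) :=
        fun hc => hH ⟨hx0, hy0, hc.1, hc.2⟩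
      rcases eq_or_lt_of_le hx0 with h | hx0'
      · exact Or.inr (Or.inl (Or.inl ⟨by simpa using h.symm, trivial⟩))
      rcases eq_or_lt_of_le hy0 with h | hy0'
      · exact Or.inr (Or.inr ⟨trivial, by simpa using h.symm⟩)
      rcases eq_or_ne x 2 with h | hx2
      · exact Or.inr (Or.inl (Or.inr ⟨by simpa using h, trivial⟩))
      have hx4 : x < 4 := by
        by_contra hc
        push_neg at hc
        apply hviol
        constructor
        · nlinarith [mul_nonneg (by linarith : (0:ℝ) ≤ (q:ℝ)-(r:ℝ)) (by linarith : (0:ℝ) ≤ x-4)]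
        · nlinarith [mul_nonneg (by linarith : (0:ℝ) ≤ (r:ℝ)) (by linarith : (0:ℝ) ≤ x-4)]
      rcases lt_or_gt_of_ne hx2 with hlt | hgt
      · -- x < 2 : in R1
        left; left
        refine ⟨⟨hx0', hlt⟩, ⟨hy0', ?_⟩⟩
        show y < g1 x
        rw [hg1]; simp only
        rcases not_and_or.mp hviol with hv | hv <;> push_neg at hv
        · linarith
        · -- y < g2 x ≤ g1 x on x ≤ 2
          nlinarith [mul_nonneg (by linarith : (0:ℝ) ≤ (q:ℝ)-2*(r:ℝ)) (by linarith : (0:ℝ) ≤ 2-x)]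
      · -- 2 < x < 4 : in R2
        left; right
        refine ⟨⟨hgt, hx4⟩, ⟨hy0', ?_⟩⟩
        show y < g2 x
        rw [hg2]; simp only
        rcases not_and_or.mp hviol with hv | hv <;> push_neg at hv
        · nlinarith [mul_nonneg (by linarith : (0:ℝ) ≤ (q:ℝ)-2*(r:ℝ)) (by linarith : (0:ℝ) ≤ x-2)]
        · linarith
    have hpos1 : ∀ x ∈ Ioo (0:ℝ) 2, 0 ≤ g1 x := by
      intro x hx
      simp only [mem_Ioo] at hx
      rw [hg1]; simp only
      nlinarith [mul_nonneg (by linarith : (0:ℝ) ≤ (q:ℝ)-(r:ℝ)) (by linarith : (0:ℝ) ≤ 2-x)]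
    have hpos2 : ∀ x ∈ Ioo (2:ℝ) 4, 0 ≤ g2 x := by
      intro x hx
      simp only [mem_Ioo] at hx
      rw [hg2]; simp only
      nlinarith [mul_nonneg (by linarith : (0:ℝ) ≤ (r:ℝ)) (by linarith : (0:ℝ) ≤ 4-x)]
    have hInt1 : ∫ x in (0:ℝ)..(2:ℝ), g1 x = (q:ℝ) + (r:ℝ) := by
      have hfe : g1 = fun x => (q:ℝ) + (-(((q:ℝ)-(r:ℝ))/2))*x := by
        funext x; rw [hg1]; ring
      rw [hfe, int_lin]; ring
    have hInt2 : ∫ x in (2:ℝ)..(4:ℝ), g2 x = (r:ℝ) := by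
      have hfe : g2 = fun x => 2*(r:ℝ) + (-((r:ℝ)/2))*x := by
        funext x; rw [hg2]; ring
      rw [hfe, int_lin]; ring
    have hvR1 : volume R1 = ENNReal.ofReal ((q:ℝ) + (r:ℝ)) := by
      rw [hR1, volume_under_s8 0 2 (by norm_num) g1 hg1c hpos1, hInt1]
    have hvR2 : volume R2 = ENNReal.ofReal ((r:ℝ)) := by
      rw [hR2, volume_under_s8 2 4 (by norm_num) g2 hg2c hpos2, hInt2]
    have hdisj : Disjoint R1 R2 := by
      rw [Set.disjoint_left]
      rintro ⟨x,y⟩ ⟨hx, -⟩ ⟨hx', -⟩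
      simp only [mem_Ioo] at hx hx'
      linarith [hx.2, hx'.1]
    have hmeas2 : MeasurableSet R2 := by
      rw [hR2]
      exact measurableSet_regionBetween measurable_const hg2c.measurable measurableSet_Ioo
    have hvol : volume ({v : ℝ × ℝ | 0 ≤ v.1 ∧ 0 ≤ v.2} \ GammaPlus U)
        = ENNReal.ofReal ((q:ℝ) + (r:ℝ)) + ENNReal.ofReal ((r:ℝ)) := by
      have hru : volume (R1 ∪ R2) = ENNReal.ofReal ((q:ℝ) + (r:ℝ)) + ENNReal.ofReal ((r:ℝ)) := by
        rw [measure_union hdisj hmeas2, hvR1, hvR2]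
      apply le_antisymm
      · calc volume ({v : ℝ × ℝ | 0 ≤ v.1 ∧ 0 ≤ v.2} \ GammaPlus U)
            ≤ volume ((R1 ∪ R2) ∪ Z) := measure_mono hsub2
          _ ≤ volume (R1 ∪ R2) + volume Z := measure_union_le _ _
          _ = ENNReal.ofReal ((q:ℝ) + (r:ℝ)) + ENNReal.ofReal ((r:ℝ)) := by
              rw [hZ, add_zero, hru]
      · rw [← hru]
        exact measure_mono hsub1
    rw [areaS, hvol, ← ENNReal.ofReal_add (by positivity) (by positivity),
      ENNReal.toReal_ofReal (by positivity)]
    ring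
  rw [newtonNumber, ha, hb, harea]
  ring

/-! Assembly -/

lemma attain3 (k r q : ℕ) (hr : 1 ≤ r) (hq : 2*r ≤ q) (hq4k : q ≤ 4*k) (hk : 2 ≤ k) :
    ∀ m : ℤ, (m:ℝ) = (q:ℝ) + 4*(r:ℝ) - 3 → Attainable {(4, 0), (0, 4 * k)} m := by
  intro m hm
  refine ⟨{(2,r),(0,q)}, ?_⟩
  have hg := gamma3_eq ({(4, 0), (0, 4 * k)} ∪ {(2,r),(0,q)}) q r hr hq
    (by simp) (by simp) (by simp) ?_
  · rw [newton3 _ q r hr hq hg, hm]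
  · intro v hv
    simp only [Finset.mem_union, Finset.mem_insert, Finset.mem_singleton] at hv
    rcases hv with (h|h)|(h|h) <;> subst h <;> constructor <;> simp <;> omega

lemma attain2 (k p q : ℕ) (hp : 1 ≤ p) (hq : 1 ≤ q)
    (h4 : p*q ≤ q*4) (h4k : p*q ≤ p*(4*k)) :
    ∀ m : ℤ, (m:ℝ) = ((p:ℝ)-1) * ((q:ℝ)-1) → Attainable {(4, 0), (0, 4 * k)} m := by
  intro m hm
  refine ⟨{(p,0),(0,q)}, ?_⟩
  have hg := gamma2_eq ({(4, 0), (0, 4 * k)} ∪ {(p,0),(0,q)}) p q hp hq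
    (by simp) (by simp) ?_
  · rw [newton2 _ p q hp hq hg, hm]
  · intro v hv
    simp only [Finset.mem_union, Finset.mem_insert, Finset.mem_singleton] at hv
    rcases hv with (h|h)|(h|h) <;> subst h
    · simpa using h4
    · simpa using h4k
    · simp [mul_comm]
    · simp

/-- for `k ≥ 2` every `n` with `1 ≤ n ≤ 12k - 3`,
`n ∉ {12k - 4, 12k - 5, 12k - 10}`, is attainable from `tr(4, 4k)`. -/
theorem stmt_8 (k : ℕ) (hk : 2 ≤ k) (n : ℤ) (hn1 : 1 ≤ n) (hn2 : n ≤ 12 * (k : ℤ) - 3)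
    (h1 : n ≠ 12 * (k : ℤ) - 4) (h2 : n ≠ 12 * (k : ℤ) - 5)
    (h3 : n ≠ 12 * (k : ℤ) - 10) :
    Attainable {(4, 0), (0, 4 * k)} n := by
  by_cases hA : n = 1
  · refine attain2 k 2 2 (by norm_num) (by norm_num) (by norm_num) (by omega) n ?_
    rw [hA]; norm_num
  by_cases hB : n = 2
  · refine attain2 k 2 3 (by norm_num) (by norm_num) (by norm_num) (by omega) n ?_
    rw [hB]; norm_num
  by_cases hC : n = 12 * (k:ℤ) - 6
  · refine attain2 k 4 (4*k-1) (by norm_num) (by omega) (by omega) (by omega) n ?_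
    have hc : ((4*k-1 : ℕ) : ℝ) = 4*(k:ℝ) - 1 := by
      push_cast [Nat.cast_sub (by omega : 1 ≤ 4*k)]; ring
    rw [hC, hc]
    push_cast
    ring
  by_cases hD : n ≤ 4*(k:ℤ) + 1
  · set q : ℕ := n.toNat - 1 with hqdef
    have heq : (q:ℤ) + 4 = n + 3 := by omega
    have heqR : (q:ℝ) + 4 = (n:ℝ) + 3 := by exact_mod_cast heq
    refine attain3 k 1 q (by norm_num) (by omega) (by omega) hk n ?_
    push_cast
    linarith
  · set r : ℕ := (n.toNat + 3 - 4*k + 3) / 4 with hrdef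
    set q : ℕ := n.toNat + 3 - 4*r with hqdef
    have heq : (q:ℤ) + 4*(r:ℤ) = n + 3 := by omega
    have heqR : (q:ℝ) + 4*(r:ℝ) = (n:ℝ) + 3 := by exact_mod_cast heq
    refine attain3 k r q (by omega) (by omega) (by omega) hk n ?_
    linarith
end

section
/- Let p ≥ 5 and q ≥ 1 be integers with p not dividing q, let r = q mod p, and suppose 2 ≤ r ≤ p−2. Then for every integer l with 0 ≤ l ≤ r−2 one has (r−l)·(p−(r−l)) − (p−1) ≥ gcd(p, q−l−1). -/
/-!
Subtracting a multiple of `p` does not change `gcd p ·`, so `gcd(p, q-l-1) = gcd(p, r-l-1) ≤ r-l-1`.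
With `s = r - l`, the remaining inequality `s - 1 ≤ s(p-s) - (p-1)` is `(s-1)(p-s-2) ≥ 0`.
-/

theorem Nat.gcd_sub_eq_gcd_mod_sub {p q k : ℕ} (hk : k ≤ q % p) :
    Nat.gcd p (q - k) = Nat.gcd p (q % p - k) := by
  have hq : q - k = (q % p - k) + q / p * p := by
    have := Nat.mod_add_div q p
    rw [mul_comm] at this
    omega
  rw [hq, Nat.gcd_add_mul_right_right]

theorem Int.sub_one_le_mul_sub_sub_pred {s p : ℤ} (hs : 1 ≤ s) (hsp : s + 2 ≤ p) :
    s - 1 ≤ s * (p - s) - (p - 1) := by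
  have key : s * (p - s) - (p - 1) - (s - 1) = (s - 1) * (p - s - 2) := by ring
  have := mul_nonneg (sub_nonneg.2 hs) (by linarith : (0 : ℤ) ≤ p - s - 2)
  linarith

theorem stmt_13_general (p q r l : ℕ)
    (hrdef : r = q % p) (hr2 : 2 ≤ r) (hrp : r ≤ p - 2) (hl : l ≤ r - 2) :
    ((r : ℤ) - (l : ℤ)) * ((p : ℤ) - ((r : ℤ) - (l : ℤ))) - ((p : ℤ) - 1) ≥
      (Nat.gcd p (q - l - 1) : ℤ) := by
  have hgcd : Nat.gcd p (q - l - 1) = Nat.gcd p (r - (l + 1)) := by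
    rw [Nat.sub_sub, hrdef]
    exact Nat.gcd_sub_eq_gcd_mod_sub (by omega)
  have hle : Nat.gcd p (q - l - 1) ≤ r - (l + 1) :=
    hgcd ▸ Nat.le_of_dvd (by omega) (Nat.gcd_dvd_right _ _)
  have hbound := Int.sub_one_le_mul_sub_sub_pred (s := (r : ℤ) - l) (p := p) (by omega) (by omega)
  omega

/-- the overlap inequality
`(r-l)(p-(r-l)) - (p-1) ≥ gcd(p, q-l-1)` for `0 ≤ l ≤ r-2`, where `r = q % p`
and `2 ≤ r ≤ p - 2`, `p ≥ 5`. -/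
theorem stmt_13 (p q r l : ℕ) (hp : 5 ≤ p) (hq : 1 ≤ q) (hnd : ¬ p ∣ q)
    (hrdef : r = q % p) (hr2 : 2 ≤ r) (hrp : r ≤ p - 2) (hl : l ≤ r - 2) :
    ((r : ℤ) - (l : ℤ)) * ((p : ℤ) - ((r : ℤ) - (l : ℤ))) - ((p : ℤ) - 1) ≥
      (Nat.gcd p (q - l - 1) : ℤ) :=
  stmt_13_general p q r l hrdef hr2 hrp hl
end

section
/- Let p ≥ 1 and q ≥ 1 be integers and let (u,v) be a lattice point with u ≥ 1, v ≥ 1 and q·u + p·v < p·q. Then ν({(0,q),(u,v),(p,0)}) = q·u + p·v − p − q + 1; in particular this one-point deformation lowers the Newton number of tr(p,q) by exactly p·q − q·u − p·v. -/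
open Pointwise MeasureTheory

section NewtonAux

open Set


/-- Half-plane description of the Newton polyhedron of `{(0,Q),(U,V),(P,0)}`. -/
def Kset (P Q U V : ℝ) : Set (ℝ × ℝ) :=
  {w : ℝ × ℝ | 0 ≤ w.1 ∧ 0 ≤ w.2 ∧ U * Q ≤ (Q - V) * w.1 + U * w.2 ∧
    V * P ≤ V * w.1 + (P - U) * w.2}

lemma gamma_eq {P Q U V : ℝ} (hP : 1 ≤ P) (hQ : 1 ≤ Q) (hU : 1 ≤ U) (hV : 1 ≤ V)
    (hlt : Q * U + P * V < P * Q) :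
    convexHull ℝ {((0:ℝ), Q), (U, V), (P, 0)} + {w : ℝ × ℝ | 0 ≤ w.1 ∧ 0 ≤ w.2}
      = Kset P Q U V := by
  have hU0 : (0:ℝ) < U := lt_of_lt_of_le zero_lt_one hU
  have hV0 : (0:ℝ) < V := lt_of_lt_of_le zero_lt_one hV
  have hP0 : (0:ℝ) < P := lt_of_lt_of_le zero_lt_one hP
  have hQ0 : (0:ℝ) < Q := lt_of_lt_of_le zero_lt_one hQ
  have hUP : U < P := by nlinarith
  have hVQ : V < Q := by nlinarith
  apply Set.Subset.antisymm
  · rw [Set.add_subset_iff]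
    have hKconv : Convex ℝ (Kset P Q U V) := by
      intro x hx y hy a b ha hb hab
      obtain ⟨hx1, hx2, hx3, hx4⟩ := hx
      obtain ⟨hy1, hy2, hy3, hy4⟩ := hy
      have hba : a = 1 - b := by linarith
      subst hba
      refine ⟨?_, ?_, ?_, ?_⟩ <;>
        simp only [Prod.fst_add, Prod.snd_add, Prod.smul_fst, Prod.smul_snd, smul_eq_mul]
      · exact add_nonneg (mul_nonneg ha hx1) (mul_nonneg hb hy1)
      · exact add_nonneg (mul_nonneg ha hx2) (mul_nonneg hb hy2)
      · nlinarith [mul_le_mul_of_nonneg_left hx3 ha, mul_le_mul_of_nonneg_left hy3 hb]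
      · nlinarith [mul_le_mul_of_nonneg_left hx4 ha, mul_le_mul_of_nonneg_left hy4 hb]
    have hsub : ({((0:ℝ), Q), (U, V), (P, 0)} : Set (ℝ × ℝ)) ⊆ Kset P Q U V := by
      rintro w (rfl | rfl | rfl)
      · exact ⟨le_refl 0, le_of_lt hQ0,
          by show U*Q ≤ (Q-V)*0 + U*Q; linarith,
          by show V*P ≤ V*0 + (P-U)*Q; nlinarith⟩
      · exact ⟨le_of_lt hU0, le_of_lt hV0,
          by show U*Q ≤ (Q-V)*U + U*V; nlinarith,
          by show V*P ≤ V*U + (P-U)*V; nlinarith⟩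
      · exact ⟨le_of_lt hP0, le_refl 0,
          by show U*Q ≤ (Q-V)*P + U*0; nlinarith,
          by show V*P ≤ V*P + (P-U)*0; linarith⟩
    intro a ha b hb
    have haK : a ∈ Kset P Q U V := convexHull_min hsub hKconv ha
    obtain ⟨ha1, ha2, ha3, ha4⟩ := haK
    obtain ⟨hb1, hb2⟩ := hb
    refine ⟨by simpa using add_nonneg ha1 hb1, by simpa using add_nonneg ha2 hb2, ?_, ?_⟩ <;>
      simp only [Prod.fst_add, Prod.snd_add] <;> nlinarith
  · rintro w ⟨hx, hy, h1, h2⟩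
    rw [Set.mem_add]
    rcases le_or_gt U w.1 with hxu | hxu
    · rcases le_or_gt P w.1 with hxp | hxp
      · refine ⟨(P, 0), subset_convexHull ℝ _ (by simp), (w.1 - P, w.2), ⟨by simpa using hxp, hy⟩, ?_⟩
        rw [Prod.ext_iff]; constructor <;> simp
      · -- U ≤ w.1 < P : point on segment (U,V)-(P,0)
        have hD : (0:ℝ) < P - U := by linarith
        refine ⟨((P - w.1)/(P-U)) • ((U:ℝ), V) + ((w.1 - U)/(P-U)) • ((P:ℝ), (0:ℝ)),
          (convex_convexHull ℝ _)
            (subset_convexHull ℝ _ (by simp)) (subset_convexHull ℝ _ (by simp))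
            (div_nonneg (by linarith) (le_of_lt hD)) (div_nonneg (by linarith) (le_of_lt hD))
            (by field_simp; ring),
          (0, w.2 - V * (P - w.1)/(P-U)), ⟨le_refl 0, ?_⟩, ?_⟩
        · have : V * (P - w.1) / (P - U) ≤ w.2 := by
            rw [div_le_iff₀ hD]; nlinarith
          simpa using sub_nonneg.2 this
        · rw [Prod.ext_iff]
          constructor <;> simp only [Prod.fst_add, Prod.snd_add, Prod.smul_fst, Prod.smul_snd,
            smul_eq_mul] <;> field_simp <;> ring
    · -- 0 ≤ w.1 < U : point on segment (0,Q)-(U,V)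
      refine ⟨((U - w.1)/U) • ((0:ℝ), Q) + (w.1/U) • ((U:ℝ), (V:ℝ)),
        (convex_convexHull ℝ _)
          (subset_convexHull ℝ _ (by simp)) (subset_convexHull ℝ _ (by simp))
          (div_nonneg (by linarith) (le_of_lt hU0)) (div_nonneg hx (le_of_lt hU0))
          (by field_simp; ring),
        (0, w.2 - ((U - w.1) * Q + w.1 * V)/U), ⟨le_refl 0, ?_⟩, ?_⟩
      · have : ((U - w.1) * Q + w.1 * V) / U ≤ w.2 := by
          rw [div_le_iff₀ hU0]; nlinarith
        simpa using sub_nonneg.2 this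
      · rw [Prod.ext_iff]
        constructor <;> simp only [Prod.fst_add, Prod.snd_add, Prod.smul_fst, Prod.smul_snd,
          smul_eq_mul] <;> field_simp <;> ring

lemma axisA_set {P Q U V : ℝ} (hP : 1 ≤ P) (hQ : 1 ≤ Q) (hU : 1 ≤ U) (hV : 1 ≤ V)
    (hlt : Q * U + P * V < P * Q) :
    {x : ℝ | (x, (0:ℝ)) ∈ Kset P Q U V} = Set.Ici P := by
  have hV0 : (0:ℝ) < V := lt_of_lt_of_le zero_lt_one hV
  have hP0 : (0:ℝ) < P := lt_of_lt_of_le zero_lt_one hP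
  have hQ0 : (0:ℝ) < Q := lt_of_lt_of_le zero_lt_one hQ
  have hU0 : (0:ℝ) < U := lt_of_lt_of_le zero_lt_one hU
  have hUP : U < P := by nlinarith
  have hVQ : V < Q := by nlinarith
  ext x
  simp only [Kset, Set.mem_setOf_eq, Set.mem_Ici]
  constructor
  · rintro ⟨-, -, -, h2⟩
    nlinarith
  · intro hx
    have h1 := mul_le_mul_of_nonneg_left hx (le_of_lt (sub_pos.2 hVQ))
    have h2 := mul_le_mul_of_nonneg_left hx (le_of_lt hV0)
    refine ⟨by linarith, le_refl 0, by nlinarith, by nlinarith⟩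

lemma axisB_set {P Q U V : ℝ} (hP : 1 ≤ P) (hQ : 1 ≤ Q) (hU : 1 ≤ U) (hV : 1 ≤ V)
    (hlt : Q * U + P * V < P * Q) :
    {y : ℝ | ((0:ℝ), y) ∈ Kset P Q U V} = Set.Ici Q := by
  have hU0 : (0:ℝ) < U := lt_of_lt_of_le zero_lt_one hU
  have hP0 : (0:ℝ) < P := lt_of_lt_of_le zero_lt_one hP
  have hQ0 : (0:ℝ) < Q := lt_of_lt_of_le zero_lt_one hQ
  have hV0 : (0:ℝ) < V := lt_of_lt_of_le zero_lt_one hV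
  have hUP : U < P := by nlinarith
  have hVQ : V < Q := by nlinarith
  ext y
  simp only [Kset, Set.mem_setOf_eq, Set.mem_Ici]
  constructor
  · rintro ⟨-, -, h1, -⟩
    nlinarith
  · intro hy
    have h1 := mul_le_mul_of_nonneg_left hy (le_of_lt (sub_pos.2 hUP))
    have h2 := mul_le_mul_of_nonneg_left hy (le_of_lt hU0)
    refine ⟨le_refl 0, by linarith, by nlinarith, by nlinarith⟩

lemma vol_compl {P Q U V : ℝ} (hP : 1 ≤ P) (hQ : 1 ≤ Q) (hU : 1 ≤ U) (hV : 1 ≤ V)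
    (hlt : Q * U + P * V < P * Q) :
    volume ({w : ℝ × ℝ | 0 ≤ w.1 ∧ 0 ≤ w.2} \ Kset P Q U V)
      = ENNReal.ofReal ((U * Q + P * V) / 2) := by
  have hU0 : (0:ℝ) < U := lt_of_lt_of_le zero_lt_one hU
  have hV0 : (0:ℝ) < V := lt_of_lt_of_le zero_lt_one hV
  have hP0 : (0:ℝ) < P := lt_of_lt_of_le zero_lt_one hP
  have hQ0 : (0:ℝ) < Q := lt_of_lt_of_le zero_lt_one hQ
  have hUP : U < P := by nlinarith
  have hVQ : V < Q := by nlinarith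
  have hD : (0:ℝ) < P - U := by linarith
  set l1 : ℝ → ℝ := fun x => (U * Q - (Q - V) * x) / U with hl1
  set l2 : ℝ → ℝ := fun x => V * (P - x) / (P - U) with hl2
  have hl1c : Continuous l1 := by rw [hl1]; fun_prop
  have hl2c : Continuous l2 := by rw [hl2]; fun_prop
  set R1 := regionBetween (fun _ => (0:ℝ)) l1 (Set.Ioo 0 U) with hR1
  set R2 := regionBetween (fun _ => (0:ℝ)) l2 (Set.Ico U P) with hR2
  have hE : (0:ℝ) ≤ P * Q - Q * U - P * V := by nlinarith
  have hcmp1 : ∀ x : ℝ, x ≤ U → l2 x ≤ l1 x := by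
    intro x hx
    rw [hl2, hl1]
    rw [div_le_div_iff₀ hD hU0]
    nlinarith [mul_nonneg (sub_nonneg.2 hx) hE]
  have hcmp2 : ∀ x : ℝ, U ≤ x → l1 x ≤ l2 x := by
    intro x hx
    rw [hl2, hl1, div_le_div_iff₀ hU0 hD]
    nlinarith [mul_nonneg (sub_nonneg.2 hx) hE]
  have hsub1 : R1 ∪ R2 ⊆ {w : ℝ × ℝ | 0 ≤ w.1 ∧ 0 ≤ w.2} \ Kset P Q U V := by
    rintro w (⟨hw1, hw2⟩ | ⟨hw1, hw2⟩)
    · refine ⟨⟨le_of_lt hw1.1, le_of_lt hw2.1⟩, ?_⟩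
      rintro ⟨-, -, h1, -⟩
      have h : w.2 < l1 w.1 := hw2.2
      rw [hl1, lt_div_iff₀ hU0] at h
      nlinarith
    · refine ⟨⟨le_trans (le_of_lt hU0) hw1.1, le_of_lt hw2.1⟩, ?_⟩
      rintro ⟨-, -, -, h2⟩
      have h : w.2 < l2 w.1 := hw2.2
      rw [hl2, lt_div_iff₀ hD] at h
      nlinarith
  have hsub2 : {w : ℝ × ℝ | 0 ≤ w.1 ∧ 0 ≤ w.2} \ Kset P Q U V ⊆
      (R1 ∪ R2) ∪ ({w : ℝ × ℝ | w.1 = 0} ∪ {w : ℝ × ℝ | w.2 = 0}) := by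
    rintro w ⟨⟨hx, hy⟩, hnk⟩
    rcases eq_or_lt_of_le hx with h0 | hx0
    · exact Or.inr (Or.inl h0.symm)
    rcases eq_or_lt_of_le hy with h0 | hy0
    · exact Or.inr (Or.inr h0.symm)
    left
    have hviol : (Q - V) * w.1 + U * w.2 < U * Q ∨ V * w.1 + (P - U) * w.2 < V * P := by
      by_contra hcon
      push_neg at hcon
      exact hnk ⟨hx, hy, hcon.1, hcon.2⟩
    have hyl : w.2 < l1 w.1 ∨ w.2 < l2 w.1 := by
      rcases hviol with h | h
      · left; rw [hl1, lt_div_iff₀ hU0]; nlinarith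
      · right; rw [hl2, lt_div_iff₀ hD]; nlinarith
    rcases le_or_gt U w.1 with hux | hux
    · right
      have hylt2 : w.2 < l2 w.1 := by
        rcases hyl with h | h
        · exact lt_of_lt_of_le h (hcmp2 _ hux)
        · exact h
      have hxp : w.1 < P := by
        by_contra hc
        push_neg at hc
        have hle : l2 w.1 ≤ 0 := by
          rw [hl2]
          exact div_nonpos_iff.2 (Or.inr ⟨by nlinarith, by linarith⟩)
        linarith
      exact ⟨⟨hux, hxp⟩, hy0, hylt2⟩
    · left
      have hylt1 : w.2 < l1 w.1 := by
        rcases hyl with h | h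
        · exact h
        · exact lt_of_lt_of_le h (hcmp1 _ (le_of_lt hux))
      exact ⟨⟨hx0, hux⟩, hy0, hylt1⟩
  have hR2meas : MeasurableSet R2 :=
    measurableSet_regionBetween measurable_const hl2c.measurable measurableSet_Ico
  have hZ : volume ({w : ℝ × ℝ | w.1 = 0} ∪ {w : ℝ × ℝ | w.2 = 0}) = 0 := by
    refine le_antisymm (le_trans (measure_union_le _ _) ?_) zero_le
    have e1 : {w : ℝ × ℝ | w.1 = 0} = ({0} : Set ℝ) ×ˢ (Set.univ : Set ℝ) := by
      ext ⟨a, b⟩; simp [eq_comm]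
    have e2 : {w : ℝ × ℝ | w.2 = 0} = (Set.univ : Set ℝ) ×ˢ ({0} : Set ℝ) := by
      ext ⟨a, b⟩; simp [eq_comm]
    rw [e1, e2, Measure.volume_eq_prod, Measure.prod_prod, Measure.prod_prod]
    simp
  have hdisj : Disjoint R1 R2 := by
    rw [Set.disjoint_left]
    rintro w ⟨hw1, -⟩ ⟨hw2, -⟩
    exact absurd hw2.1 (not_le.2 hw1.2)
  have hvol1 : volume R1 = ENNReal.ofReal (U * (Q + V) / 2) := by
    rw [Measure.volume_eq_prod, hR1]
    rw [volume_regionBetween_eq_integral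
      (integrableOn_const measure_Ioo_lt_top.ne)
      (hl1c.integrableOn_Icc.mono_set Set.Ioo_subset_Icc_self)
      measurableSet_Ioo
      (fun x hx => by
        rw [hl1]
        apply div_nonneg _ (le_of_lt hU0)
        nlinarith [hx.1, hx.2])]
    congr 1
    simp only [Pi.sub_apply, sub_zero]
    rw [← integral_Ioc_eq_integral_Ioo,
      ← intervalIntegral.integral_of_le (le_of_lt hU0), hl1]
    rw [intervalIntegral.integral_div]
    have hig : IntervalIntegrable (fun x : ℝ => (Q - V) * x) volume 0 U :=
      (by fun_prop : Continuous fun x : ℝ => (Q - V) * x).intervalIntegrable _ _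
    rw [intervalIntegral.integral_sub intervalIntegrable_const hig]
    rw [intervalIntegral.integral_const, intervalIntegral.integral_const_mul, integral_id]
    field_simp
    ring
  have hvol2 : volume R2 = ENNReal.ofReal (V * (P - U) / 2) := by
    rw [Measure.volume_eq_prod, hR2]
    rw [volume_regionBetween_eq_integral
      (integrableOn_const measure_Ico_lt_top.ne)
      (hl2c.integrableOn_Icc.mono_set Set.Ico_subset_Icc_self)
      measurableSet_Ico
      (fun x hx => by
        rw [hl2]
        apply div_nonneg _ (le_of_lt hD)
        nlinarith [hx.1, hx.2])]
    congr 1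
    simp only [Pi.sub_apply, sub_zero]
    rw [integral_Ico_eq_integral_Ioo, ← integral_Ioc_eq_integral_Ioo,
      ← intervalIntegral.integral_of_le (le_of_lt hUP), hl2]
    rw [intervalIntegral.integral_div]
    rw [intervalIntegral.integral_const_mul]
    have hig : IntervalIntegrable (fun x : ℝ => x) volume U P :=
      (by fun_prop : Continuous fun x : ℝ => x).intervalIntegrable _ _
    rw [intervalIntegral.integral_sub intervalIntegrable_const hig]
    rw [intervalIntegral.integral_const, integral_id]
    field_simp
    ring
  have hmain : volume ({w : ℝ × ℝ | 0 ≤ w.1 ∧ 0 ≤ w.2} \ Kset P Q U V)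
      = volume (R1 ∪ R2) := by
    refine le_antisymm ?_ (measure_mono hsub1)
    calc volume ({w : ℝ × ℝ | 0 ≤ w.1 ∧ 0 ≤ w.2} \ Kset P Q U V)
        ≤ volume ((R1 ∪ R2) ∪ ({w : ℝ × ℝ | w.1 = 0} ∪ {w : ℝ × ℝ | w.2 = 0})) :=
          measure_mono hsub2
      _ ≤ volume (R1 ∪ R2) + volume ({w : ℝ × ℝ | w.1 = 0} ∪ {w : ℝ × ℝ | w.2 = 0}) :=
          measure_union_le _ _
      _ = volume (R1 ∪ R2) := by rw [hZ, add_zero]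
  rw [hmain, measure_union hdisj hR2meas, hvol1, hvol2,
    ← ENNReal.ofReal_add (by nlinarith) (by nlinarith)]
  congr 1
  ring

end NewtonAux

/-- a one-point deformation of `tr(p,q)` by a lattice point
`(u,v)` below the segment has Newton number `qu + pv - p - q + 1`. -/
theorem stmt_15 (p q u v : ℕ) (hp : 1 ≤ p) (hq : 1 ≤ q) (hu : 1 ≤ u) (hv : 1 ≤ v)
    (hlt : q * u + p * v < p * q) :
    newtonNumber {(0, q), (u, v), (p, 0)} =
      (q : ℝ) * (u : ℝ) + (p : ℝ) * (v : ℝ) - (p : ℝ) - (q : ℝ) + 1 := by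
  have hP : (1:ℝ) ≤ (p:ℝ) := by exact_mod_cast hp
  have hQ : (1:ℝ) ≤ (q:ℝ) := by exact_mod_cast hq
  have hU : (1:ℝ) ≤ (u:ℝ) := by exact_mod_cast hu
  have hV : (1:ℝ) ≤ (v:ℝ) := by exact_mod_cast hv
  have hltR : (q:ℝ) * (u:ℝ) + (p:ℝ) * (v:ℝ) < (p:ℝ) * (q:ℝ) := by exact_mod_cast hlt
  have hGP : GammaPlus {(0, q), (u, v), (p, 0)} = Kset p q u v := by
    rw [GammaPlus]
    have himg : (fun w : ℕ × ℕ => ((w.1 : ℝ), (w.2 : ℝ))) ''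
        (({(0, q), (u, v), (p, 0)} : Finset (ℕ × ℕ)) : Set (ℕ × ℕ))
        = {((0:ℝ), (q:ℝ)), ((u:ℝ), (v:ℝ)), ((p:ℝ), (0:ℝ))} := by
      simp [Finset.coe_insert, Set.image_insert_eq]
    rw [himg]
    exact gamma_eq hP hQ hU hV hltR
  have hA : axisA {(0, q), (u, v), (p, 0)} = p := by
    rw [axisA]
    have h : {x : ℝ | (x, (0:ℝ)) ∈ GammaPlus {(0, q), (u, v), (p, 0)}} = Set.Ici (p:ℝ) := by
      rw [hGP]; exact axisA_set hP hQ hU hV hltR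
    rw [h, csInf_Ici]
  have hB : axisB {(0, q), (u, v), (p, 0)} = q := by
    rw [axisB]
    have h : {y : ℝ | ((0:ℝ), y) ∈ GammaPlus {(0, q), (u, v), (p, 0)}} = Set.Ici (q:ℝ) := by
      rw [hGP]; exact axisB_set hP hQ hU hV hltR
    rw [h, csInf_Ici]
  have hS : areaS {(0, q), (u, v), (p, 0)} = ((u:ℝ) * q + (p:ℝ) * v) / 2 := by
    rw [areaS, hGP, vol_compl hP hQ hU hV hltR, ENNReal.toReal_ofReal (by nlinarith)]
  rw [newtonNumber, hA, hB, hS]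
  ring
end

section
/- Let p ≥ 2 and q ≥ 2 be integers with (p,q) ≠ (2,2), and set m = gcd(p,q). Then there exists a lattice point (u,v) with 1 ≤ u < p and 1 ≤ v < q such that q·u + p·v = p·q − m; consequently the number (p−1)(q−1) − m is attainable from {(p,0),(0,q)} by a one-point deformation. -/
open Pointwise MeasureTheory

lemma exists_uv_int (p q m : ℕ) (hp : 2 ≤ p) (hq : 2 ≤ q) (hne : (p, q) ≠ (2, 2))
    (hm : m = Nat.gcd p q) :
    ∃ U V : ℤ, 1 ≤ U ∧ U < p ∧ 1 ≤ V ∧ V < q ∧ q * U + p * V = p * q - m := by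
  have hm1 : 1 ≤ m := hm ▸ Nat.gcd_pos_of_pos_left q (by omega)
  have hpz : (2:ℤ) ≤ (p:ℤ) := by exact_mod_cast hp
  have hqz : (2:ℤ) ≤ (q:ℤ) := by exact_mod_cast hq
  have hmz : (1:ℤ) ≤ (m:ℤ) := by exact_mod_cast hm1
  obtain ⟨p', hp'⟩ : m ∣ p := hm ▸ Nat.gcd_dvd_left p q
  obtain ⟨q', hq'⟩ : m ∣ q := hm ▸ Nat.gcd_dvd_right p q
  have hp'1 : 1 ≤ p' := by
    rcases Nat.eq_zero_or_pos p' with h | h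
    · rw [h, Nat.mul_zero] at hp'; omega
    · omega
  have hq'1 : 1 ≤ q' := by
    rcases Nat.eq_zero_or_pos q' with h | h
    · rw [h, Nat.mul_zero] at hq'; omega
    · omega
  have hmlep : m ≤ p := by calc m = m * 1 := by ring
                                _ ≤ m * p' := Nat.mul_le_mul_left m hp'1
                                _ = p := hp'.symm
  have hmleq : m ≤ q := by calc m = m * 1 := by ring
                                _ ≤ m * q' := Nat.mul_le_mul_left m hq'1
                                _ = q := hq'.symm
  by_cases hpq : p ∣ q
  · -- m = p
    have hmp' : m = p := by
      have h1 : p ∣ Nat.gcd p q := Nat.dvd_gcd dvd_rfl hpq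
      have h2 := Nat.le_of_dvd (by omega : 0 < Nat.gcd p q) h1
      omega
    obtain ⟨w, hw⟩ := hpq
    have hwz : (q:ℤ) = p * w := by exact_mod_cast hw
    have hw1 : 1 ≤ w := by
      rcases Nat.eq_zero_or_pos w with h | h
      · rw [h, Nat.mul_zero] at hw; omega
      · omega
    have hkey : 2 ≤ q - w := by
      rcases Nat.lt_or_ge w 2 with h | h
      · have hw2 : w = 1 := by omega
        rw [hw2, Nat.mul_one] at hw
        have : p ≠ 2 ∨ q ≠ 2 := by
          by_contra hc; push_neg at hc
          exact hne (by rw [hc.1, hc.2])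
        omega
      · have h1 : 1 ≤ p - 1 := by omega
        have h2 : 2 * 1 ≤ w * (p - 1) := Nat.mul_le_mul h h1
        have h3 : w * (p - 1) = q - w := by
          rw [hw, Nat.mul_sub, Nat.mul_one, Nat.mul_comm]
        omega
    have hwq : w ≤ q := by omega
    refine ⟨1, (q:ℤ) - 1 - w, le_refl _, by omega, ?_, ?_, ?_⟩
    · have : ((2:ℕ):ℤ) ≤ ((q - w : ℕ):ℤ) := by exact_mod_cast hkey
      rw [Nat.cast_sub hwq] at this; push_cast at this ⊢; omega
    · have : (0:ℤ) ≤ (w:ℤ) := by positivity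
      omega
    · have hmpz : (m:ℤ) = p := by exact_mod_cast hmp'
      rw [hmpz, hwz]; ring
  · -- m < p, p' ≥ 2
    have hmltp : m < p := by
      rcases Nat.lt_or_ge m p with h | h
      · exact h
      · have hmp2 : m = p := by omega
        exact absurd (hmp2 ▸ (⟨q', hq'⟩ : m ∣ q)) hpq
    have hp'2 : 2 ≤ p' := by
      rcases Nat.lt_or_ge p' 2 with h | h
      · have : p' = 1 := by omega
        rw [this, Nat.mul_one] at hp'; omega
      · exact h
    have hp'z : (2:ℤ) ≤ (p':ℤ) := by exact_mod_cast hp'2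
    have hq'z : (1:ℤ) ≤ (q':ℤ) := by exact_mod_cast hq'1
    obtain ⟨a, b, hbez⟩ : ∃ a b : ℤ, (m:ℤ) = p * a + q * b :=
      ⟨_, _, by rw [hm]; exact Nat.gcd_eq_gcd_ab p q⟩
    obtain ⟨U, t, hU0, hUlt, hUdef⟩ :
        ∃ U t : ℤ, 0 ≤ U ∧ U < (p':ℤ) ∧ U = -b - p' * t :=
      ⟨(-b) % (p':ℤ), (-b) / (p':ℤ), Int.emod_nonneg _ (by omega),
        Int.emod_lt_of_pos _ (by omega), by rw [Int.emod_def]⟩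
    have hqp' : (q:ℤ) * p' = p * q' := by
      have : q * p' = p * q' := by rw [hp', hq']; ring
      exact_mod_cast this
    have key : (q:ℤ) * U + m = p * (a - q' * t) := by
      rw [hUdef]; linear_combination hbez - t * hqp'
    have hU1 : 1 ≤ U := by
      rcases eq_or_lt_of_le hU0 with h0 | h0
      · exfalso
        rw [← h0] at key
        have hd : (p:ℤ) ∣ m := ⟨a - q' * t, by linarith⟩
        have h5 : (p:ℤ) ≤ m := Int.le_of_dvd (by omega) hd
        have h6 : (m:ℤ) < p := by exact_mod_cast hmltp
        omega
      · omega
    have hplep : (p':ℤ) ≤ (p:ℤ) := by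
      have : p' ≤ p := Nat.le_of_dvd (by omega) ⟨m, by rw [hp']; ring⟩
      exact_mod_cast this
    set V : ℤ := (q:ℤ) - (a - q' * t) with hV
    have hsum : (q:ℤ) * U + p * V = p * q - m := by rw [hV]; linear_combination key
    have h1 : (q:ℤ) * U ≤ q * (p' - 1) :=
      mul_le_mul_of_nonneg_left (by omega) (by positivity)
    have h2 : (q:ℤ) * (p' - 1) = p * q' - q := by linear_combination hqp'
    have h3 : (p:ℤ) * V ≥ p * q - m - (p * q' - q) := by linarith
    have hNpos : (0:ℤ) < p * V := by
      rcases Nat.lt_or_ge m 2 with hm2 | hm2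
      · have hm1' : m = 1 := by omega
        have hq'q : q' = q := by rw [hm1', Nat.one_mul] at hq'; omega
        have hmz1 : (m:ℤ) = 1 := by exact_mod_cast hm1'
        have hqz' : (q':ℤ) = q := by exact_mod_cast hq'q
        rw [hmz1] at h3
        nlinarith [hqz']
      · have hqq' : (q:ℤ) = m * q' := by exact_mod_cast hq'
        have hmz2 : (2:ℤ) ≤ m := by exact_mod_cast hm2
        have hmq2 : (m:ℤ) ≤ q := by exact_mod_cast hmleq
        have hd : (1:ℤ) ≤ q - q' := by
          have e1 : (q:ℤ) - q' = q' * (m - 1) := by linear_combination hqq'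
          have e2 : (1:ℤ) * 1 ≤ q' * (m - 1) :=
            mul_le_mul hq'z (by linarith) (by norm_num) (by linarith)
          linarith
        have he : (p:ℤ) * (q - q') = p * q - p * q' := by ring
        have hf : (p:ℤ) * 1 ≤ p * (q - q') :=
          mul_le_mul_of_nonneg_left hd (by linarith)
        linarith
    have hVpos : 1 ≤ V := by
      by_contra h
      push_neg at h
      have h0 : V ≤ 0 := by omega
      have : (p:ℤ) * V ≤ 0 := mul_nonpos_of_nonneg_of_nonpos (by linarith) h0
      linarith
    have hVq : V < q := by
      by_contra h
      push_neg at h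
      have h0 : (p:ℤ) * q ≤ p * V := mul_le_mul_of_nonneg_left h (by linarith)
      have hqU : (q:ℤ) ≤ q * U := le_mul_of_one_le_right (by linarith) hU1
      linarith
    exact ⟨U, V, hU1, by omega, hVpos, hVq, hsum⟩

lemma exists_uv (p q m : ℕ) (hp : 2 ≤ p) (hq : 2 ≤ q) (hne : (p, q) ≠ (2, 2))
    (hm : m = Nat.gcd p q) :
    ∃ u v : ℕ, 1 ≤ u ∧ u < p ∧ 1 ≤ v ∧ v < q ∧ q * u + p * v = p * q - m := by
  obtain ⟨U, V, hU1, hUp, hV1, hVq, hsum⟩ := exists_uv_int p q m hp hq hne hm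
  refine ⟨U.toNat, V.toNat, by omega, by omega, by omega, by omega, ?_⟩
  have hm1 : 1 ≤ m := hm ▸ Nat.gcd_pos_of_pos_left q (by omega)
  have hmle : m ≤ p * q := le_trans (hm ▸ Nat.gcd_le_left q (by omega)) (by nlinarith)
  have h : ((q * U.toNat + p * V.toNat : ℕ) : ℤ) = ((p * q - m : ℕ) : ℤ) := by
    push_cast [Int.toNat_of_nonneg (by omega : (0:ℤ) ≤ U),
      Int.toNat_of_nonneg (by omega : (0:ℤ) ≤ V), Nat.cast_sub hmle]
    linarith
  exact_mod_cast h

def Hset (p q u v : ℕ) : Set (ℝ × ℝ) :=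
  {z | 0 ≤ z.1 ∧ 0 ≤ z.2 ∧ ((q:ℝ) - v) * z.1 + u * z.2 ≥ u * q ∧
    (v:ℝ) * z.1 + ((p:ℝ) - u) * z.2 ≥ v * p}

variable {p q u v : ℕ}

lemma image_eq :
    ((fun w : ℕ × ℕ => ((w.1 : ℝ), (w.2 : ℝ))) '' (({(p,0),(0,q),(u,v)} : Finset (ℕ × ℕ)) : Set (ℕ × ℕ)))
    = {((p:ℝ), 0), (0, (q:ℝ)), ((u:ℝ), (v:ℝ))} := by
  simp [Finset.coe_insert, Set.image_insert_eq]

lemma hset_convex : Convex ℝ (Hset p q u v) := by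
  intro x hx y hy a b ha hb hab
  obtain ⟨hx1, hx2, hx3, hx4⟩ := hx
  obtain ⟨hy1, hy2, hy3, hy4⟩ := hy
  obtain rfl : b = 1 - a := by linarith
  refine ⟨?_, ?_, ?_, ?_⟩
  · simp only [Prod.fst_add, Prod.smul_fst, smul_eq_mul]
    nlinarith
  · simp only [Prod.snd_add, Prod.smul_snd, smul_eq_mul]
    nlinarith
  · simp only [Prod.fst_add, Prod.snd_add, Prod.smul_fst, Prod.smul_snd, smul_eq_mul]
    nlinarith [mul_le_mul_of_nonneg_left hx3 ha, mul_le_mul_of_nonneg_left hy3 hb]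
  · simp only [Prod.fst_add, Prod.snd_add, Prod.smul_fst, Prod.smul_snd, smul_eq_mul]
    nlinarith [mul_le_mul_of_nonneg_left hx4 ha, mul_le_mul_of_nonneg_left hy4 hb]

lemma gamma_subset (hu1 : 1 ≤ u) (hup : u < p) (hv1 : 1 ≤ v) (hvq : v < q)
    (hlt : q * u + p * v < p * q) :
    GammaPlus {(p,0),(0,q),(u,v)} ⊆ Hset p q u v := by
  have hlt' : (q:ℝ) * u + p * v < p * q := by exact_mod_cast hlt
  have huq : (u:ℝ) < p := by exact_mod_cast hup
  have hvq' : (v:ℝ) < q := by exact_mod_cast hvq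
  have hu0 : (1:ℝ) ≤ u := by exact_mod_cast hu1
  have hv0 : (1:ℝ) ≤ v := by exact_mod_cast hv1
  rintro z ⟨w, hw, d, hd, rfl⟩
  rw [image_eq] at hw
  have hsub : ({((p:ℝ), 0), (0, (q:ℝ)), ((u:ℝ), (v:ℝ))} : Set (ℝ × ℝ)) ⊆ Hset p q u v := by
    rintro x (rfl | rfl | rfl) <;>
      refine ⟨by norm_num, by norm_num, ?_, ?_⟩ <;>
      · simp only [Hset]
        nlinarith
  have hw' : w ∈ Hset p q u v := convexHull_min hsub hset_convex hw
  obtain ⟨h1, h2, h3, h4⟩ := hw'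
  obtain ⟨hd1, hd2⟩ := hd
  refine ⟨?_, ?_, ?_, ?_⟩ <;> simp only [Prod.fst_add, Prod.snd_add]
  · linarith
  · linarith
  · nlinarith
  · nlinarith

lemma gamma_superset (hu1 : 1 ≤ u) (hup : u < p) (hv1 : 1 ≤ v) (hvq : v < q)
    (hlt : q * u + p * v < p * q) :
    Hset p q u v ⊆ GammaPlus {(p,0),(0,q),(u,v)} := by
  have huq : (u:ℝ) < p := by exact_mod_cast hup
  have hvq' : (v:ℝ) < q := by exact_mod_cast hvq
  have hu0 : (1:ℝ) ≤ u := by exact_mod_cast hu1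
  have hv0 : (1:ℝ) ≤ v := by exact_mod_cast hv1
  have hupos : (0:ℝ) < u := by linarith
  have hpu : (0:ℝ) < (p:ℝ) - u := by linarith
  rintro z ⟨h1, h2, h3, h4⟩
  rw [GammaPlus, image_eq]
  set S : Set (ℝ × ℝ) := {((p:ℝ), 0), (0, (q:ℝ)), ((u:ℝ), (v:ℝ))} with hS
  have hA : ((p:ℝ), (0:ℝ)) ∈ S := by simp [hS]
  have hB : ((0:ℝ), (q:ℝ)) ∈ S := by simp [hS]
  have hC : ((u:ℝ), (v:ℝ)) ∈ S := by simp [hS]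
  rw [Set.mem_add]
  rcases le_or_gt z.1 u with hz1 | hz1
  · -- segment B C
    set s : ℝ := z.1 / u with hs
    have hs0 : 0 ≤ s := div_nonneg h1 (le_of_lt hupos)
    have hs1 : s ≤ 1 := by rw [hs, div_le_one hupos]; exact hz1
    refine ⟨(1 - s) • ((0:ℝ), (q:ℝ)) + s • ((u:ℝ), (v:ℝ)),
      segment_subset_convexHull hB hC ⟨1 - s, s, by linarith, hs0, by ring, rfl⟩,
      (0, z.2 - ((1 - s) * q + s * v)), ⟨le_refl _, ?_⟩, ?_⟩
  --   · exact le_refl _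
    · simp only [Set.mem_setOf_eq]
      have : u * z.2 ≥ u * ((1 - s) * q + s * v) := by
        have hsu : s * u = z.1 := by rw [hs]; field_simp
        nlinarith
      nlinarith
    · have hsu : s * u = z.1 := by rw [hs]; field_simp
      apply Prod.ext
      · simp [hsu]
      · simp
  · rcases le_or_gt z.1 p with hz2 | hz2
    · -- segment C A
      set s : ℝ := (z.1 - u) / ((p:ℝ) - u) with hs
      have hs0 : 0 ≤ s := div_nonneg (by linarith) (le_of_lt hpu)
      have hs1 : s ≤ 1 := by rw [hs, div_le_one hpu]; linarith
      refine ⟨(1 - s) • ((u:ℝ), (v:ℝ)) + s • ((p:ℝ), (0:ℝ)),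
        segment_subset_convexHull hC hA ⟨1 - s, s, by linarith, hs0, by ring, rfl⟩,
        (0, z.2 - (1 - s) * v), ⟨le_refl _, ?_⟩, ?_⟩
      · simp only [Set.mem_setOf_eq]
        have hsu : s * ((p:ℝ) - u) = z.1 - u := by rw [hs]; field_simp
        have : ((p:ℝ) - u) * z.2 ≥ ((p:ℝ) - u) * ((1 - s) * v) := by nlinarith
        nlinarith
      · have hsu : s * ((p:ℝ) - u) = z.1 - u := by rw [hs]; field_simp
        apply Prod.ext
        · simp only [Prod.fst_add, Prod.smul_fst, smul_eq_mul]
          push_cast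
          nlinarith [hsu]
        · simp
    · -- z.1 ≥ p
      exact ⟨((p:ℝ), (0:ℝ)), subset_convexHull ℝ S hA,
        (z.1 - p, z.2), ⟨by show (0:ℝ) ≤ z.1 - (p:ℝ); linarith, h2⟩, by apply Prod.ext <;> simp⟩

lemma gamma_eq_s16 (hu1 : 1 ≤ u) (hup : u < p) (hv1 : 1 ≤ v) (hvq : v < q)
    (hlt : q * u + p * v < p * q) :
    GammaPlus {(p,0),(0,q),(u,v)} = Hset p q u v :=
  subset_antisymm (gamma_subset hu1 hup hv1 hvq hlt) (gamma_superset hu1 hup hv1 hvq hlt)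

lemma axisA_eq (hu1 : 1 ≤ u) (hup : u < p) (hv1 : 1 ≤ v) (hvq : v < q)
    (hlt : q * u + p * v < p * q) :
    axisA {(p,0),(0,q),(u,v)} = p := by
  have hlt' : (q:ℝ) * u + p * v < p * q := by exact_mod_cast hlt
  have huq : (u:ℝ) < p := by exact_mod_cast hup
  have hvq' : (v:ℝ) < q := by exact_mod_cast hvq
  have hu0 : (1:ℝ) ≤ u := by exact_mod_cast hu1
  have hv0 : (1:ℝ) ≤ v := by exact_mod_cast hv1
  rw [axisA, gamma_eq_s16 hu1 hup hv1 hvq hlt]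
  have : {x : ℝ | (x, (0:ℝ)) ∈ Hset p q u v} = Set.Ici (p:ℝ) := by
    ext x
    simp only [Hset, Set.mem_setOf_eq, Set.mem_Ici]
    constructor
    · rintro ⟨_, _, _, h4⟩
      simp only [mul_zero, add_zero] at h4
      nlinarith
    · intro hx
      refine ⟨by linarith, le_refl _, ?_, ?_⟩ <;> simp only [mul_zero, add_zero] <;> nlinarith
  rw [this, csInf_Ici]

lemma axisB_eq (hu1 : 1 ≤ u) (hup : u < p) (hv1 : 1 ≤ v) (hvq : v < q)
    (hlt : q * u + p * v < p * q) :
    axisB {(p,0),(0,q),(u,v)} = q := by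
  have hlt' : (q:ℝ) * u + p * v < p * q := by exact_mod_cast hlt
  have huq : (u:ℝ) < p := by exact_mod_cast hup
  have hvq' : (v:ℝ) < q := by exact_mod_cast hvq
  have hu0 : (1:ℝ) ≤ u := by exact_mod_cast hu1
  have hv0 : (1:ℝ) ≤ v := by exact_mod_cast hv1
  rw [axisB, gamma_eq_s16 hu1 hup hv1 hvq hlt]
  have : {y : ℝ | ((0:ℝ), y) ∈ Hset p q u v} = Set.Ici (q:ℝ) := by
    ext y
    simp only [Hset, Set.mem_setOf_eq, Set.mem_Ici]
    constructor
    · rintro ⟨_, _, h3, _⟩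
      simp only [mul_zero, zero_add] at h3
      nlinarith
    · intro hy
      refine ⟨le_refl _, by linarith, ?_, ?_⟩ <;> simp only [mul_zero, zero_add] <;> nlinarith
  rw [this, csInf_Ici]

set_option maxHeartbeats 1000000 in
lemma areaS_eq (hu1 : 1 ≤ u) (hup : u < p) (hv1 : 1 ≤ v) (hvq : v < q)
    (hlt : q * u + p * v < p * q) :
    areaS {(p,0),(0,q),(u,v)} = ((q:ℝ) * u + (p:ℝ) * v) / 2 := by
  have hlt' : (q:ℝ) * u + p * v < p * q := by exact_mod_cast hlt
  have huq : (u:ℝ) < p := by exact_mod_cast hup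
  have hvq' : (v:ℝ) < q := by exact_mod_cast hvq
  have hu0 : (1:ℝ) ≤ u := by exact_mod_cast hu1
  have hv0 : (1:ℝ) ≤ v := by exact_mod_cast hv1
  have hupos : (0:ℝ) < u := by linarith
  have hpu : (0:ℝ) < (p:ℝ) - u := by linarith
  have hppos : (0:ℝ) < p := by linarith
  set l1 : ℝ → ℝ := fun t => ((u:ℝ) * q - ((q:ℝ) - v) * t) / u with hl1
  set l2 : ℝ → ℝ := fun t => (v:ℝ) * ((p:ℝ) - t) / ((p:ℝ) - u) with hl2
  set g : ℝ → ℝ := fun t => if t ≤ (u:ℝ) then l1 t else l2 t with hg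
  have hK : (0:ℝ) ≤ (p:ℝ) * q - p * v - q * u := by linarith
  have hqv : (0:ℝ) ≤ (q:ℝ) - v := by linarith
  -- Step A : set identity
  have hsetEq : {z : ℝ × ℝ | 0 ≤ z.1 ∧ 0 ≤ z.2} \ GammaPlus {(p,0),(0,q),(u,v)}
      = {z : ℝ × ℝ | z.1 ∈ Set.Ico (0:ℝ) p ∧ z.2 ∈ Set.Ico (0:ℝ) (g z.1)} := by
    rw [gamma_eq_s16 hu1 hup hv1 hvq hlt]
    ext z
    simp only [Set.mem_diff, Set.mem_setOf_eq, Hset, Set.mem_Ico, not_and, not_le, ge_iff_le]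
    constructor
    · rintro ⟨⟨h1, h2⟩, hnot⟩
      by_cases hc : (u:ℝ) * q ≤ ((q:ℝ) - v) * z.1 + u * z.2
      · -- second inequality fails
        have hf : (v:ℝ) * z.1 + ((p:ℝ) - u) * z.2 < v * p := hnot h1 h2 hc
        have hz1p : z.1 < p := by nlinarith
        refine ⟨⟨h1, hz1p⟩, h2, ?_⟩
        rw [hg]
        by_cases hzu : z.1 ≤ (u:ℝ)
        · -- z.2 < l2 z.1 ≤ l1 z.1
          simp only [hzu, if_true, hl1]
          rw [lt_div_iff₀ hupos]
          nlinarith [mul_lt_mul_of_pos_left hf hupos,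
            mul_nonneg (sub_nonneg.mpr hzu) hK]
        · simp only [hzu, if_false, hl2]
          rw [lt_div_iff₀ hpu]
          linarith
      · -- first inequality fails
        push_neg at hc
        have hz1p : z.1 < p := by nlinarith
        refine ⟨⟨h1, hz1p⟩, h2, ?_⟩
        rw [hg]
        by_cases hzu : z.1 ≤ (u:ℝ)
        · simp only [hzu, if_true, hl1]
          rw [lt_div_iff₀ hupos]
          linarith
        · push_neg at hzu
          simp only [not_le.mpr hzu, if_false, hl2]
          rw [lt_div_iff₀ hpu]
          nlinarith [mul_lt_mul_of_pos_left hc hpu,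
            mul_nonneg (le_of_lt (sub_pos.mpr hzu)) hK]
    · rintro ⟨⟨h1, h1p⟩, h2, h3⟩
      refine ⟨⟨h1, h2⟩, ?_⟩
      intro _ _ hin1
      rw [hg] at h3
      by_cases hzu : z.1 ≤ (u:ℝ)
      · simp only [hzu, if_true, hl1] at h3
        rw [lt_div_iff₀ hupos] at h3
        exfalso
        linarith
      · simp only [hzu, if_false, hl2] at h3
        rw [lt_div_iff₀ hpu] at h3
        linarith
  rw [areaS, hsetEq]
  -- Step B : measurability
  have hgm : Measurable g := by
    apply Measurable.ite (measurableSet_le measurable_id measurable_const)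
    · exact (measurable_const.sub (measurable_const.mul measurable_id)).div_const _
    · exact (measurable_const.mul (measurable_const.sub measurable_id)).div_const _
  have hEm : MeasurableSet {z : ℝ × ℝ | z.1 ∈ Set.Ico (0:ℝ) p ∧ z.2 ∈ Set.Ico (0:ℝ) (g z.1)} := by
    have e1 : MeasurableSet {z : ℝ × ℝ | z.1 ∈ Set.Ico (0:ℝ) p} :=
      measurable_fst measurableSet_Ico
    have e2 : MeasurableSet {z : ℝ × ℝ | 0 ≤ z.2} :=
      measurable_snd measurableSet_Ici
    have e3 : MeasurableSet {z : ℝ × ℝ | z.2 < g z.1} :=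
      measurableSet_lt measurable_snd (hgm.comp measurable_fst)
    have : {z : ℝ × ℝ | z.1 ∈ Set.Ico (0:ℝ) p ∧ z.2 ∈ Set.Ico (0:ℝ) (g z.1)}
        = {z : ℝ × ℝ | z.1 ∈ Set.Ico (0:ℝ) p} ∩ ({z : ℝ × ℝ | 0 ≤ z.2} ∩ {z : ℝ × ℝ | z.2 < g z.1}) := by
      ext z; simp [Set.mem_Ico, and_assoc]
    rw [this]
    exact e1.inter (e2.inter e3)
  -- Step C : volume as an integral
  have hC : volume {z : ℝ × ℝ | z.1 ∈ Set.Ico (0:ℝ) p ∧ z.2 ∈ Set.Ico (0:ℝ) (g z.1)}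
      = ∫⁻ x in Set.Ico (0:ℝ) p, ENNReal.ofReal (g x) := by
    rw [MeasureTheory.Measure.volume_eq_prod, MeasureTheory.Measure.prod_apply hEm]
    rw [← MeasureTheory.lintegral_indicator measurableSet_Ico]
    congr 1
    ext x
    by_cases hx : x ∈ Set.Ico (0:ℝ) p
    · rw [Set.indicator_of_mem hx]
      have : Prod.mk x ⁻¹' {z : ℝ × ℝ | z.1 ∈ Set.Ico (0:ℝ) p ∧ z.2 ∈ Set.Ico (0:ℝ) (g z.1)}
          = Set.Ico (0:ℝ) (g x) := by
        ext y
        simp only [Set.mem_preimage, Set.mem_setOf_eq]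
        exact ⟨fun h => h.2, fun h => ⟨hx, h⟩⟩
      rw [this, Real.volume_Ico, sub_zero]
    · rw [Set.indicator_of_notMem hx]
      have : Prod.mk x ⁻¹' {z : ℝ × ℝ | z.1 ∈ Set.Ico (0:ℝ) p ∧ z.2 ∈ Set.Ico (0:ℝ) (g z.1)}
          = ∅ := by
        ext y
        simp only [Set.mem_preimage, Set.mem_setOf_eq, Set.mem_empty_iff_false, iff_false]
        exact fun h => hx h.1
      rw [this]; simp
  -- integrability
  have hint1 : IntegrableOn l1 (Set.Ico (0:ℝ) u) := by
    apply (Continuous.integrableOn_Icc (by continuity)).mono_set Set.Ico_subset_Icc_self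
  have hint2 : IntegrableOn l2 (Set.Ico (u:ℝ) p) := by
    apply (Continuous.integrableOn_Icc (by continuity)).mono_set Set.Ico_subset_Icc_self
  have heq1 : Set.EqOn l1 g (Set.Ico (0:ℝ) u) := by
    intro x hx
    rw [hg]
    simp [le_of_lt hx.2]
  have heq2 : Set.EqOn l2 g (Set.Ico (u:ℝ) p) := by
    intro x hx
    rw [hg]
    rcases eq_or_lt_of_le hx.1 with h | h
    · have hxu : x ≤ (u:ℝ) := le_of_eq h.symm
      simp only [hxu, if_true, hl1, hl2, ← h, le_refl]
      field_simp
      ring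
    · simp [not_le.mpr h]
  have hgint1 : IntegrableOn g (Set.Ico (0:ℝ) u) := hint1.congr_fun heq1 measurableSet_Ico
  have hgint2 : IntegrableOn g (Set.Ico (u:ℝ) p) := hint2.congr_fun heq2 measurableSet_Ico
  have hunion : Set.Ico (0:ℝ) u ∪ Set.Ico (u:ℝ) p = Set.Ico (0:ℝ) p :=
    Set.Ico_union_Ico_eq_Ico (by linarith) (by linarith)
  have hgint : IntegrableOn g (Set.Ico (0:ℝ) p) := by
    rw [← hunion]; exact hgint1.union hgint2
  have hgpos : 0 ≤ᵐ[volume.restrict (Set.Ico (0:ℝ) p)] g := by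
    filter_upwards [MeasureTheory.ae_restrict_mem measurableSet_Ico] with x hx
    rw [hg]
    by_cases hxu : x ≤ (u:ℝ)
    · simp only [hxu, if_true, hl1]
      apply div_nonneg _ (le_of_lt hupos)
      nlinarith [hx.1]
    · push_neg at hxu
      simp only [not_le.mpr hxu, if_false, hl2]
      apply div_nonneg _ (le_of_lt hpu)
      nlinarith [hx.2]
  have hD : (∫ x in Set.Ico (0:ℝ) p, g x) = ((q:ℝ) * u + (p:ℝ) * v) / 2 := by
    rw [← hunion, MeasureTheory.setIntegral_union (Set.Ico_disjoint_Ico_same)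
      measurableSet_Ico hgint1 hgint2]
    have i1 : (∫ x in Set.Ico (0:ℝ) u, g x) = ∫ x in (0:ℝ)..u, l1 x := by
      rw [← MeasureTheory.setIntegral_congr_fun measurableSet_Ico heq1]
      rw [MeasureTheory.integral_Ico_eq_integral_Ioo, ← MeasureTheory.integral_Ioc_eq_integral_Ioo,
        ← intervalIntegral.integral_of_le (by linarith)]
    have i2 : (∫ x in Set.Ico (u:ℝ) p, g x) = ∫ x in (u:ℝ)..p, l2 x := by
      rw [← MeasureTheory.setIntegral_congr_fun measurableSet_Ico heq2]
      rw [MeasureTheory.integral_Ico_eq_integral_Ioo, ← MeasureTheory.integral_Ioc_eq_integral_Ioo,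
        ← intervalIntegral.integral_of_le (by linarith)]
    have c1 : (∫ x in (0:ℝ)..u, l1 x) = ((q:ℝ) + v) * u / 2 := by
      have : ∀ x : ℝ, l1 x = (q:ℝ) + (-(((q:ℝ) - v) / u)) * x := by
        intro x; rw [hl1]; field_simp; ring
      simp_rw [this]
      rw [intervalIntegral.integral_add intervalIntegrable_const
        (intervalIntegral.intervalIntegrable_id.const_mul _),
        intervalIntegral.integral_const, intervalIntegral.integral_const_mul, integral_id]
      simp only [smul_eq_mul, sub_zero]
      field_simp
      ring
    have c2 : (∫ x in (u:ℝ)..p, l2 x) = (v:ℝ) * ((p:ℝ) - u) / 2 := by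
      have : ∀ x : ℝ, l2 x = (v:ℝ) * p / ((p:ℝ) - u) + (-((v:ℝ) / ((p:ℝ) - u))) * x := by
        intro x; rw [hl2]; field_simp; ring
      simp_rw [this]
      rw [intervalIntegral.integral_add intervalIntegrable_const
        (intervalIntegral.intervalIntegrable_id.const_mul _),
        intervalIntegral.integral_const, intervalIntegral.integral_const_mul, integral_id]
      simp only [smul_eq_mul]
      field_simp
      ring
    rw [i1, i2, c1, c2]
    ring
  rw [hC, ← MeasureTheory.ofReal_integral_eq_lintegral_ofReal hgint hgpos, hD,
    ENNReal.toReal_ofReal (by positivity)]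

lemma newton_eq {p q u v : ℕ} (hu1 : 1 ≤ u) (hup : u < p) (hv1 : 1 ≤ v) (hvq : v < q)
    (hlt : q * u + p * v < p * q) :
    newtonNumber {(p,0),(0,q),(u,v)} = ((q:ℝ) * u + (p:ℝ) * v) - p - q + 1 := by
  unfold newtonNumber
  rw [areaS_eq hu1 hup hv1 hvq hlt, axisA_eq hu1 hup hv1 hvq hlt,
    axisB_eq hu1 hup hv1 hvq hlt]
  ring

/-- for `p, q ≥ 2`, `(p,q) ≠ (2,2)`, there is a lattice point
`(u,v)`, `1 ≤ u < p`, `1 ≤ v < q`, with `qu + pv = pq - m` where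
`m = gcd(p,q)`; the corresponding one-point deformation realizes the Newton
number `(p-1)(q-1) - m`. -/
theorem stmt_16 (p q m : ℕ) (hp : 2 ≤ p) (hq : 2 ≤ q) (hne : (p, q) ≠ (2, 2))
    (hm : m = Nat.gcd p q) :
    ∃ u v : ℕ, 1 ≤ u ∧ u < p ∧ 1 ≤ v ∧ v < q ∧ q * u + p * v = p * q - m ∧
      newtonNumber {(p, 0), (0, q), (u, v)} =
        ((p : ℝ) - 1) * ((q : ℝ) - 1) - (m : ℝ) := by
  obtain ⟨u, v, hu1, hup, hv1, hvq, hsum⟩ := exists_uv p q m hp hq hne hm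
  have hm1 : 1 ≤ m := by
    rw [hm]; exact Nat.gcd_pos_of_pos_left q (by omega)
  have hmle : m ≤ p * q := le_trans (hm ▸ Nat.gcd_le_left q (by omega)) (by nlinarith)
  have hlt : q * u + p * v < p * q := by omega
  refine ⟨u, v, hu1, hup, hv1, hvq, hsum, ?_⟩
  rw [newton_eq hu1 hup hv1 hvq hlt]
  have h2 : ((q:ℝ) * u + p * v) = p * q - m := by
    have := congrArg (Nat.cast (R := ℝ)) hsum
    push_cast [Nat.cast_sub hmle] at this
    linarith
  rw [h2]; ring
end
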